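/- arXiv:1011.2322 — 3 statements merged into one kernel-verified Lean document; each statement's English description precedes it below -/
import Mathlib

section
/- If f1 ≠ f2 (on a set of positive μ-measure), then φ(θ) = ∫ f1^{1-θ} f2^{θ} dμ < 1 for all θ ∈ (0,1), and φ is strictly convex on (0,1); consequently φ attains its minimum at a unique θ0 ∈ (0,1) with φ(θ0) < 1. -/
/-!
Write `a ^ (1 - θ) * b ^ θ = exp (log a + θ (log b - log a))`: for each point `x` the integrand
is the exponential of an affine function of `θ`, hence convex in `θ`, and strictly convex
wherever `f1 x ≠ f2 x`. Integrating, `φ` is strictly convex on `[0, 1]`, where it is also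
continuous by dominated convergence (the integrand is at most `f1 + f2`). Since
`φ 0 = φ 1 = 1`, strict convexity forces `φ < 1` on `(0, 1)`, so the minimum of `φ` on
`[0, 1]` is attained inside, and it is unique by strict convexity.
-/

open MeasureTheory Set Real

lemma exists_mem_Ioo_isMinOn_Icc {f : ℝ → ℝ} {a b c : ℝ} (hf : ContinuousOn f (Icc a b))
    (hc : c ∈ Ioo a b) (hca : f c < f a) (hcb : f c < f b) :
    ∃ θ ∈ Ioo a b, IsMinOn f (Icc a b) θ := by
  obtain ⟨θ, hθ, hmin⟩ := isCompact_Icc.exists_isMinOn ⟨c, Ioo_subset_Icc_self hc⟩ hf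
  have hθc : f θ < f a ∧ f θ < f b :=
    ⟨(hmin (Ioo_subset_Icc_self hc)).trans_lt hca, (hmin (Ioo_subset_Icc_self hc)).trans_lt hcb⟩
  refine ⟨θ, ⟨lt_of_le_of_ne hθ.1 ?_, lt_of_le_of_ne hθ.2 ?_⟩, hmin⟩
  · rintro rfl; exact hθc.1.false
  · rintro rfl; exact hθc.2.false

section Pointwise

variable {a b : ℝ}

lemma rpow_one_sub_mul_rpow_eq_exp (ha : 0 < a) (hb : 0 < b) (θ : ℝ) :
    a ^ (1 - θ) * b ^ θ = exp (log a + θ * (log b - log a)) := by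
  rw [rpow_def_of_pos ha, rpow_def_of_pos hb, ← exp_add]
  ring_nf

lemma convexOn_rpow_one_sub_mul_rpow (ha : 0 < a) (hb : 0 < b) :
    ConvexOn ℝ univ fun θ : ℝ ↦ a ^ (1 - θ) * b ^ θ := by
  refine ⟨convex_univ, fun x _ y _ s t hs ht hst ↦ ?_⟩
  simp only [rpow_one_sub_mul_rpow_eq_exp ha hb, smul_eq_mul]
  have := convexOn_exp.2 (mem_univ (log a + x * (log b - log a)))
    (mem_univ (log a + y * (log b - log a))) hs ht hst
  simp only [smul_eq_mul] at this
  convert this using 2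
  linear_combination (-log a) * hst

lemma strictConvexOn_rpow_one_sub_mul_rpow (ha : 0 < a) (hb : 0 < b) (hab : a ≠ b) :
    StrictConvexOn ℝ univ fun θ : ℝ ↦ a ^ (1 - θ) * b ^ θ := by
  have hlog : log b - log a ≠ 0 := sub_ne_zero.2 fun h ↦ hab (log_injOn_pos ha hb h.symm)
  refine ⟨convex_univ, fun x _ y _ hxy s t hs ht hst ↦ ?_⟩
  simp only [rpow_one_sub_mul_rpow_eq_exp ha hb, smul_eq_mul]
  have hne : log a + x * (log b - log a) ≠ log a + y * (log b - log a) := by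
    simpa [hlog] using hxy
  have := strictConvexOn_exp.2 (mem_univ _) (mem_univ _) hne hs ht hst
  simp only [smul_eq_mul] at this
  convert this using 2
  linear_combination (-log a) * hst

end Pointwise

section Integral

variable {α : Type*} [MeasurableSpace α] {μ : Measure α}

lemma integral_lt_integral_of_ae_le_of_measure_setOf_lt_ne_zero {f g : α → ℝ}
    (hf : Integrable f μ) (hg : Integrable g μ) (hle : f ≤ᵐ[μ] g)
    (hlt : μ {x | f x < g x} ≠ 0) :
    ∫ x, f x ∂μ < ∫ x, g x ∂μ := by
  rw [← sub_pos, ← integral_sub hg hf,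
    integral_pos_iff_support_of_nonneg_ae (hle.mono fun x ↦ sub_nonneg.2) (hg.sub hf)]
  exact pos_iff_ne_zero.2 (mt (measure_mono_null fun x hx ↦ (sub_pos.2 hx).ne') hlt)

lemma strictConvexOn_integral {E : Type*} [AddCommGroup E] [Module ℝ E] {s : Set E}
    {F : E → α → ℝ} (hint : ∀ θ ∈ s, Integrable (F θ) μ)
    (hconv : ∀ᵐ x ∂μ, ConvexOn ℝ s (F · x))
    (hstrict : μ {x | StrictConvexOn ℝ s (F · x)} ≠ 0) :
    StrictConvexOn ℝ s fun θ ↦ ∫ x, F θ x ∂μ := by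
  obtain ⟨x₀, hx₀⟩ := nonempty_of_measure_ne_zero hstrict
  refine ⟨hx₀.1, fun θ hθ η hη hθη a b ha hb hab ↦ ?_⟩
  have hmem : a • θ + b • η ∈ s := hx₀.1 hθ hη ha.le hb.le hab
  have hcomb : Integrable (fun x ↦ a * F θ x + b * F η x) μ :=
    ((hint θ hθ).const_mul a).add ((hint η hη).const_mul b)
  simp only [smul_eq_mul]
  rw [← integral_const_mul, ← integral_const_mul,
    ← integral_add ((hint θ hθ).const_mul a) ((hint η hη).const_mul b)]
  refine integral_lt_integral_of_ae_le_of_measure_setOf_lt_ne_zero (hint _ hmem) hcomb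
    (hconv.mono fun x hx ↦ hx.2 hθ hη ha.le hb.le hab) (mt (measure_mono_null ?_) hstrict)
  exact fun x hx ↦ hx.2 hθ hη hθη ha hb hab

variable {f g : α → ℝ}

lemma continuousOn_integral_rpow_one_sub_mul_rpow (hf : ∀ x, 0 < f x) (hg : ∀ x, 0 < g x)
    (hint : ∀ θ ∈ Icc (0 : ℝ) 1, Integrable (fun x ↦ f x ^ (1 - θ) * g x ^ θ) μ) :
    ContinuousOn (fun θ ↦ ∫ x, f x ^ (1 - θ) * g x ^ θ ∂μ) (Icc (0 : ℝ) 1) := by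
  have hfg : Integrable (fun x ↦ f x + g x) μ := by
    have h0 := hint 0 (left_mem_Icc.2 zero_le_one)
    have h1 := hint 1 (right_mem_Icc.2 zero_le_one)
    simp only [sub_zero, rpow_one, rpow_zero, mul_one, sub_self, one_mul] at h0 h1
    exact h0.add h1
  refine continuousOn_of_dominated (fun θ hθ ↦ (hint θ hθ).aestronglyMeasurable)
    (fun θ hθ ↦ .of_forall fun x ↦ ?_) hfg (.of_forall fun x ↦ ?_)
  · have hgm := geom_mean_le_arith_mean2_weighted (sub_nonneg.2 hθ.2) hθ.1 (hf x).le (hg x).le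
      (sub_add_cancel 1 θ)
    rw [norm_of_nonneg (mul_nonneg (rpow_nonneg (hf x).le _) (rpow_nonneg (hg x).le _))]
    nlinarith [hf x, hg x, hθ.1, hθ.2]
  · simp only [rpow_one_sub_mul_rpow_eq_exp (hf x) (hg x)]
    fun_prop

lemma strictConvexOn_integral_rpow_one_sub_mul_rpow (hf : ∀ x, 0 < f x) (hg : ∀ x, 0 < g x)
    (hint : ∀ θ ∈ Icc (0 : ℝ) 1, Integrable (fun x ↦ f x ^ (1 - θ) * g x ^ θ) μ)
    (hne : μ {x | f x ≠ g x} ≠ 0) :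
    StrictConvexOn ℝ (Icc (0 : ℝ) 1) fun θ ↦ ∫ x, f x ^ (1 - θ) * g x ^ θ ∂μ := by
  refine strictConvexOn_integral hint (.of_forall fun x ↦
    (convexOn_rpow_one_sub_mul_rpow (hf x) (hg x)).subset (subset_univ _) (convex_Icc 0 1))
    (mt (measure_mono_null fun x hx ↦ ?_) hne)
  exact (strictConvexOn_rpow_one_sub_mul_rpow (hf x) (hg x) hx).subset
    (subset_univ _) (convex_Icc 0 1)

end Integral

theorem stmt_3_general {α : Type*} [MeasurableSpace α] (μ : Measure α) (f1 f2 : α → ℝ)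
    (hf1pos : ∀ x, 0 < f1 x) (hf2pos : ∀ x, 0 < f2 x)
    (hf1prob : ∫ x, f1 x ∂μ = 1) (hf2prob : ∫ x, f2 x ∂μ = 1)
    (hne : μ {x | f1 x ≠ f2 x} ≠ 0)
    (φ : ℝ → ℝ) (hφ : ∀ θ, φ θ = ∫ x, (f1 x) ^ (1 - θ) * (f2 x) ^ θ ∂μ)
    (hint : ∀ θ ∈ Set.Icc (0:ℝ) 1,
      Integrable (fun x => (f1 x) ^ (1 - θ) * (f2 x) ^ θ) μ) :
    (∀ θ ∈ Set.Ioo (0:ℝ) 1, φ θ < 1) ∧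
    StrictConvexOn ℝ (Set.Ioo (0:ℝ) 1) φ ∧
    (∃! θ0 : ℝ, θ0 ∈ Set.Ioo (0:ℝ) 1 ∧ IsMinOn φ (Set.Ioo (0:ℝ) 1) θ0) ∧
    (∀ θ0 : ℝ, θ0 ∈ Set.Ioo (0:ℝ) 1 → IsMinOn φ (Set.Ioo (0:ℝ) 1) θ0 → φ θ0 < 1) := by
  obtain rfl : φ = fun θ ↦ ∫ x, f1 x ^ (1 - θ) * f2 x ^ θ ∂μ := funext hφ
  have hconvex := strictConvexOn_integral_rpow_one_sub_mul_rpow hf1pos hf2pos hint hne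
  have hlt : ∀ θ ∈ Ioo (0 : ℝ) 1, ∫ x, f1 x ^ (1 - θ) * f2 x ^ θ ∂μ < 1 := fun θ hθ ↦ by
    simpa [hf1prob, hf2prob] using hconvex.lt_on_openSegment (left_mem_Icc.2 zero_le_one)
      (right_mem_Icc.2 zero_le_one) (zero_ne_one' ℝ)
      (openSegment_eq_Ioo (zero_lt_one' ℝ) ▸ hθ)
  have hstrict := hconvex.subset Ioo_subset_Icc_self (convex_Ioo 0 1)
  have hhalf : (1 / 2 : ℝ) ∈ Ioo 0 1 := by norm_num
  obtain ⟨θ0, hθ0, hmin⟩ := exists_mem_Ioo_isMinOn_Icc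
    (continuousOn_integral_rpow_one_sub_mul_rpow hf1pos hf2pos hint) hhalf
    (by simpa [hf1prob] using hlt _ hhalf) (by simpa [hf2prob] using hlt _ hhalf)
  have hmin' := hmin.on_subset Ioo_subset_Icc_self
  exact ⟨hlt, hstrict, ⟨θ0, ⟨hθ0, hmin'⟩, fun θ1 h ↦ hstrict.eq_of_isMinOn h.2 hmin' h.1 hθ0⟩,
    fun θ h _ ↦ hlt θ h⟩

/-- If `f1 ≠ f2` on a set of positive `μ`-measure (with positive densities, so the
supports agree), then `φ(θ) = ∫ f1^{1-θ} f2^{θ} dμ < 1` for all `θ ∈ (0,1)`, `φ` is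
strictly convex on `(0,1)`, and `φ` attains its minimum on `(0,1)` at a unique
`θ0 ∈ (0,1)` with `φ(θ0) < 1`. -/
theorem stmt_3 {α : Type*} [MeasurableSpace α] (μ : Measure α) [SigmaFinite μ]
    (f1 f2 : α → ℝ) (hf1meas : Measurable f1) (hf2meas : Measurable f2)
    (hf1pos : ∀ x, 0 < f1 x) (hf2pos : ∀ x, 0 < f2 x)
    (hf1prob : ∫ x, f1 x ∂μ = 1) (hf2prob : ∫ x, f2 x ∂μ = 1)
    (hne : μ {x | f1 x ≠ f2 x} ≠ 0)
    (φ : ℝ → ℝ) (hφ : ∀ θ, φ θ = ∫ x, (f1 x) ^ (1 - θ) * (f2 x) ^ θ ∂μ)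
    (hint : ∀ θ ∈ Set.Icc (0:ℝ) 1,
      Integrable (fun x => (f1 x) ^ (1 - θ) * (f2 x) ^ θ) μ) :
    (∀ θ ∈ Set.Ioo (0:ℝ) 1, φ θ < 1) ∧
    StrictConvexOn ℝ (Set.Ioo (0:ℝ) 1) φ ∧
    (∃! θ0 : ℝ, θ0 ∈ Set.Ioo (0:ℝ) 1 ∧ IsMinOn φ (Set.Ioo (0:ℝ) 1) θ0) ∧
    (∀ θ0 : ℝ, θ0 ∈ Set.Ioo (0:ℝ) 1 → IsMinOn φ (Set.Ioo (0:ℝ) 1) θ0 → φ θ0 < 1) :=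
  stmt_3_general μ f1 f2 hf1pos hf2pos hf1prob hf2prob hne φ hφ hint
end

section
/- Let b_n = P(S_n > 0) for a random walk S_n, and define q_n = P(T₁⁻ > n) where T₁⁻ = inf{j>0 : S_j ≤ 0}, with q_0 = 1. Then the generating functions satisfy Σ_{n≥0} s^n q_n = exp{ Σ_{n≥1} s^n b_n / n }, for |s| < 1. -/
open MeasureTheory ProbabilityTheory NNReal
open scoped ENNReal

namespace SpitzerAux

attribute [local instance] Classical.propDecidable

/-- partial sum of first `k` entries -/
def psum (y : ℕ → ℝ) (k : ℕ) : ℝ := ∑ i ∈ Finset.range k, y i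

/-- all partial sums up to `n` are positive -/
def PosUpTo (n : ℕ) (y : ℕ → ℝ) : Prop := ∀ k, 1 ≤ k → k ≤ n → 0 < psum y k

/-- cyclic shift by `r` of the first `n` coordinates -/
def cyc (n r : ℕ) (y : ℕ → ℝ) : ℕ → ℝ := fun i => y ((i + r) % n)

/-- number of cyclic shifts whose walk stays positive -/
noncomputable def Acount (n : ℕ) (y : ℕ → ℝ) : ℕ :=
  ((Finset.range n).filter (fun r => PosUpTo n (cyc n r y))).card

/-- strict-minimum-over-suffix predicate -/
def Zp (n : ℕ) (y : ℕ → ℝ) (k : ℕ) : Prop :=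
  ∀ j, k < j → j ≤ n → psum y k < psum y j

def drop (k : ℕ) (y : ℕ → ℝ) : ℕ → ℝ := fun i => y (k + i)

lemma psum_zero (y : ℕ → ℝ) : psum y 0 = 0 := by simp [psum]

lemma psum_succ (y : ℕ → ℝ) (k : ℕ) : psum y (k + 1) = psum y k + y k := by
  simp [psum, Finset.sum_range_succ]

lemma psum_congr {y y' : ℕ → ℝ} {n : ℕ} (h : ∀ i < n, y i = y' i) {k : ℕ} (hk : k ≤ n) :
    psum y k = psum y' k := by
  unfold psum
  refine Finset.sum_congr rfl (fun i hi => h i ?_)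
  exact lt_of_lt_of_le (Finset.mem_range.mp hi) hk

lemma posUpTo_congr {y y' : ℕ → ℝ} {n : ℕ} (h : ∀ i < n, y i = y' i) :
    PosUpTo n y ↔ PosUpTo n y' := by
  unfold PosUpTo
  refine forall_congr' fun k => forall_congr' fun _ => forall_congr' fun hk => ?_
  rw [psum_congr h hk]

lemma psum_drop (k : ℕ) (y : ℕ → ℝ) (i : ℕ) :
    psum (drop k y) i = psum y (k + i) - psum y k := by
  induction i with
  | zero => simp [psum_zero]
  | succ m ih => rw [psum_succ, ih, ← Nat.add_assoc, psum_succ]; ring_nf; rfl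

lemma psum_cyc {n r : ℕ} (hr : r < n) {k : ℕ} (hk : k ≤ n) (y : ℕ → ℝ) :
    psum (cyc n r y) k =
      if r + k ≤ n then psum y (r + k) - psum y r
      else psum y (r + k - n) + psum y n - psum y r := by
  induction k with
  | zero => rw [if_pos (by omega : r + 0 ≤ n)]; simp [psum_zero]
  | succ m ih =>
    have hm : m ≤ n := Nat.le_of_succ_le hk
    rw [psum_succ, ih hm]
    have hcv : cyc n r y m = y ((m + r) % n) := rfl
    by_cases h1 : r + (m+1) ≤ n
    · have h2 : r + m ≤ n := by omega
      have : (m + r) % n = m + r := Nat.mod_eq_of_lt (by omega)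
      rw [if_pos h1, if_pos h2, hcv, this]
      have : r + (m + 1) = (r + m) + 1 := by ring
      rw [this, psum_succ]
      have : r + m = m + r := by ring
      rw [this]; ring
    · rw [if_neg h1]
      by_cases h2 : r + m ≤ n
      · -- r + m = n
        have hrm : r + m = n := by omega
        have : (m + r) % n = 0 := by
          have : m + r = n := by omega
          simp [this]
        rw [if_pos h2, hcv, this]
        have h3 : r + (m+1) - n = 1 := by omega
        rw [h3, hrm]
        have : psum y 1 = psum y 0 + y 0 := psum_succ y 0
        rw [this, psum_zero]; ring
      · have hlt : m + r - n < n := by omega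
        have : (m + r) % n = m + r - n := by
          rw [Nat.mod_eq_sub_mod (by omega), Nat.mod_eq_of_lt hlt]
        rw [if_neg h2, hcv, this]
        have h3 : r + (m+1) - n = (r + m - n) + 1 := by omega
        rw [h3, psum_succ]
        have : r + m - n = m + r - n := by omega
        rw [this]; ring

lemma psum_cyc_total {n r : ℕ} (hr : r < n) (y : ℕ → ℝ) :
    psum (cyc n r y) n = psum y n := by
  rw [psum_cyc hr le_rfl]
  by_cases h : r + n ≤ n
  · have : r = 0 := by omega
    simp [this, psum_zero]
  · rw [if_neg h]
    have : r + n - n = r := by omega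
    rw [this]; ring

lemma posUpTo_cyc_iff {n r : ℕ} (hr : r < n) (y : ℕ → ℝ) :
    PosUpTo n (cyc n r y) ↔
      ((∀ j, r < j → j ≤ n → psum y r < psum y j) ∧
       (∀ m, 1 ≤ m → m ≤ r → psum y r < psum y n + psum y m)) := by
  constructor
  · intro h
    constructor
    · intro j hj1 hj2
      have hk : j - r ≤ n := by omega
      have := h (j - r) (by omega) hk
      rw [psum_cyc hr hk] at this
      have hrj : r + (j - r) = j := by omega
      rw [if_pos (by omega), hrj] at this
      linarith
    · intro m hm1 hm2
      have hk : (n - r) + m ≤ n := by omega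
      have := h ((n - r) + m) (by omega) hk
      rw [psum_cyc hr hk] at this
      have h1 : ¬ (r + ((n - r) + m) ≤ n) := by omega
      have h2 : r + ((n - r) + m) - n = m := by omega
      rw [if_neg h1, h2] at this
      linarith
  · rintro ⟨h1, h2⟩ k hk1 hk2
    rw [psum_cyc hr hk2]
    by_cases h : r + k ≤ n
    · rw [if_pos h]
      have := h1 (r + k) (by omega) h
      linarith
    · rw [if_neg h]
      have := h2 (r + k - n) (by omega) (by omega)
      linarith

lemma cyc_cyc (n r t : ℕ) (y : ℕ → ℝ) :
    cyc n r (cyc n t y) = cyc n ((r + t) % n) y := by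
  funext i
  unfold cyc
  congr 1
  conv_rhs => rw [Nat.add_mod, Nat.mod_mod_of_dvd _ dvd_rfl, ← Nat.add_mod]
  conv_lhs => rw [Nat.add_mod, Nat.mod_mod_of_dvd _ dvd_rfl, ← Nat.add_mod]
  rw [Nat.add_assoc]


lemma acount_congr {n : ℕ} {y y' : ℕ → ℝ} (h : ∀ i < n, y i = y' i) :
    Acount n y = Acount n y' := by
  rcases Nat.eq_zero_or_pos n with hn | hn
  · subst hn; simp [Acount]
  unfold Acount
  congr 1
  refine Finset.filter_congr (fun r hr => ?_)
  refine posUpTo_congr (fun i hi => ?_)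
  exact h _ (Nat.mod_lt _ hn)

lemma zp_zero_iff {n : ℕ} (y : ℕ → ℝ) : Zp n y 0 ↔ PosUpTo n y := by
  unfold Zp PosUpTo
  refine forall_congr' fun j => ?_
  rw [psum_zero]
  exact ⟨fun h h1 h2 => h h1 h2, fun h h1 h2 => h h1 h2⟩

lemma acount_le {n : ℕ} (y : ℕ → ℝ) : Acount n y ≤ n := by
  calc Acount n y ≤ (Finset.range n).card := Finset.card_filter_le _ _
  _ = n := Finset.card_range n

lemma acount_eq_zcard {n : ℕ} {y : ℕ → ℝ} (hpos : PosUpTo n y) :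
    Acount n y = ((Finset.range n).filter (Zp n y)).card := by
  unfold Acount
  congr 1
  refine Finset.filter_congr (fun r hr => ?_)
  have hr' : r < n := Finset.mem_range.mp hr
  rw [posUpTo_cyc_iff hr']
  constructor
  · rintro ⟨h1, _⟩ j hj1 hj2; exact h1 j hj1 hj2
  · intro hz
    refine ⟨hz, fun m hm1 hm2 => ?_⟩
    have h1 : psum y r < psum y n := hz n hr' le_rfl
    have h2 : 0 < psum y m := hpos m hm1 (le_trans hm2 (le_of_lt hr'))
    linarith

lemma acount_pos_iff {n : ℕ} (hn : 1 ≤ n) (y : ℕ → ℝ) :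
    1 ≤ Acount n y ↔ 0 < psum y n := by
  constructor
  · intro h
    have : ((Finset.range n).filter (fun r => PosUpTo n (cyc n r y))).Nonempty := by
      rw [← Finset.card_pos]; exact h
    obtain ⟨r, hr⟩ := this
    rw [Finset.mem_filter, Finset.mem_range] at hr
    have := hr.2 n hn le_rfl
    rwa [psum_cyc_total hr.1] at this
  · intro hpos
    obtain ⟨mIdx, hmIdx, hmin⟩ := Finset.exists_min_image (Finset.range n) (psum y)
      ⟨0, Finset.mem_range.mpr hn⟩
    set v := psum y mIdx with hv
    set G := (Finset.range n).filter (fun k => psum y k ≤ v) with hG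
    have hGne : G.Nonempty := ⟨mIdx, Finset.mem_filter.mpr ⟨hmIdx, le_rfl⟩⟩
    set r := G.max' hGne with hrdef
    have hrG : r ∈ G := Finset.max'_mem _ _
    rw [Finset.mem_filter, Finset.mem_range] at hrG
    have hrn : r < n := hrG.1
    have hrv : psum y r = v := le_antisymm hrG.2 (hmin r (Finset.mem_range.mpr hrn))
    have hv0 : v ≤ 0 := by
      have := hmin 0 (Finset.mem_range.mpr hn)
      rwa [psum_zero] at this
    unfold Acount
    refine Finset.card_pos.mpr ⟨r, Finset.mem_filter.mpr ⟨Finset.mem_range.mpr hrn, ?_⟩⟩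
    rw [posUpTo_cyc_iff hrn]
    constructor
    · intro j hj1 hj2
      rcases eq_or_lt_of_le hj2 with hj | hj
      · subst hj; linarith
      · -- j < n and j > r : strict since r is the last index attaining values ≤ v
        have hjv : ¬ psum y j ≤ v := by
          intro hle
          have : j ∈ G := Finset.mem_filter.mpr ⟨Finset.mem_range.mpr hj, hle⟩
          have := Finset.le_max' G j this
          omega
        have := hmin j (Finset.mem_range.mpr hj)
        push_neg at hjv
        linarith
    · intro m hm1 hm2
      have hmn : m < n := by omega
      have := hmin m (Finset.mem_range.mpr hmn)
      linarith

lemma acount_cyc (n t : ℕ) (y : ℕ → ℝ) : Acount n (cyc n t y) = Acount n y := by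
  rcases Nat.eq_zero_or_pos n with hn | hn
  · subst hn; simp [Acount]
  unfold Acount
  have hfc : (Finset.range n).filter (fun r => PosUpTo n (cyc n r (cyc n t y)))
      = (Finset.range n).filter (fun r => PosUpTo n (cyc n ((r + t) % n) y)) := by
    refine Finset.filter_congr (fun r hr => ?_)
    rw [cyc_cyc]
  rw [hfc]
  refine Finset.card_bij (fun r _ => (r + t) % n) ?_ ?_ ?_
  · intro r hr
    rw [Finset.mem_filter] at hr ⊢
    exact ⟨Finset.mem_range.mpr (Nat.mod_lt _ hn), hr.2⟩
  · intro r1 hr1 r2 hr2 h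
    rw [Finset.mem_filter, Finset.mem_range] at hr1 hr2
    have : r1 % n = r2 % n := Nat.ModEq.add_right_cancel' t h
    rwa [Nat.mod_eq_of_lt hr1.1, Nat.mod_eq_of_lt hr2.1] at this
  · intro sIdx hs
    rw [Finset.mem_filter, Finset.mem_range] at hs
    have heq : ((sIdx + (n - t % n)) % n + t) % n = sIdx := by
      rw [Nat.mod_add_mod]
      have h1 : n * (t / n) + t % n = t := Nat.div_add_mod t n
      have h2 : t % n < n := Nat.mod_lt _ hn
      have h3 : sIdx + (n - t % n) + t = sIdx + n * (t / n + 1) := by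
        have : n * (t / n + 1) = n * (t / n) + n := by ring
        omega
      rw [h3, Nat.add_mul_mod_self_left]
      exact Nat.mod_eq_of_lt hs.1
    refine ⟨(sIdx + (n - t % n)) % n, ?_, ?_⟩
    · rw [Finset.mem_filter, Finset.mem_range]
      refine ⟨Nat.mod_lt _ hn, ?_⟩
      rw [heq]; exact hs.2
    · exact heq.trans rfl


lemma posUpTo_restrict {n k : ℕ} {y : ℕ → ℝ} (h : PosUpTo n y) (hk : k ≤ n) :
    PosUpTo k y := fun j hj1 hj2 => h j hj1 (le_trans hj2 hk)

lemma zp_drop {n k : ℕ} (y : ℕ → ℝ) (hk : k ≤ n) (i : ℕ) :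
    Zp (n - k) (drop k y) i ↔ Zp n y (k + i) := by
  unfold Zp
  constructor
  · intro h j hj1 hj2
    have h2 := h (j - k) (by omega) (by omega)
    rw [psum_drop, psum_drop] at h2
    have hjk : k + (j - k) = j := by omega
    rw [hjk] at h2
    linarith
  · intro h j hj1 hj2
    rw [psum_drop, psum_drop]
    have h2 := h (k + j) (by omega) (by omega)
    linarith

lemma posUpTo_drop_of_zp {n k : ℕ} {y : ℕ → ℝ} (hzk : Zp n y k) :
    PosUpTo (n - k) (drop k y) := by
  intro j hj1 hj2
  rw [psum_drop]
  have := hzk (k + j) (by omega) (by omega)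
  linarith

lemma posUpTo_of_blocks {n k : ℕ} {y : ℕ → ℝ} (hk : k ≤ n)
    (h1 : PosUpTo k y) (h2 : PosUpTo (n - k) (drop k y)) : PosUpTo n y := by
  intro j hj1 hj2
  by_cases hjk : j ≤ k
  · exact h1 j hj1 hjk
  · push_neg at hjk
    have hd := h2 (j - k) (by omega) (by omega)
    rw [psum_drop] at hd
    have hjk2 : k + (j - k) = j := by omega
    rw [hjk2] at hd
    have hpk : 0 ≤ psum y k := by
      rcases Nat.eq_zero_or_pos k with h0 | h0
      · subst h0; rw [psum_zero]
      · exact le_of_lt (h1 k h0 le_rfl)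
    linarith

lemma zp_of_blocks {n k : ℕ} {y : ℕ → ℝ} (hk : k ≤ n)
    (h2 : PosUpTo (n - k) (drop k y)) : Zp n y k := by
  intro j hj1 hj2
  have := h2 (j - k) (by omega) (by omega)
  rw [psum_drop] at this
  have hjk : k + (j - k) = j := by omega
  rw [hjk] at this
  linarith

lemma zp_first_block {n k j : ℕ} {y : ℕ → ℝ} (hzk : Zp n y k) (hkn : k ≤ n) (hjk : j < k) :
    Zp n y j ↔ Zp k y j := by
  constructor
  · intro h i hi1 hi2; exact h i hi1 (le_trans hi2 hkn)
  · intro h i hi1 hi2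
    by_cases hik : i ≤ k
    · exact h i hi1 hik
    · push_neg at hik
      have ha := h k hjk le_rfl
      have hb := hzk i hik hi2
      linarith

lemma acount_one_iff {k : ℕ} {y : ℕ → ℝ} (hk1 : 1 ≤ k) (hpos : PosUpTo k y) :
    Acount k y = 1 ↔ ∀ j, 0 < j → j < k → ¬ Zp k y j := by
  rw [acount_eq_zcard hpos]
  have h0 : 0 ∈ (Finset.range k).filter (Zp k y) :=
    Finset.mem_filter.mpr ⟨Finset.mem_range.mpr hk1, (zp_zero_iff y).mpr hpos⟩
  constructor
  · intro h j hj1 hjk hzj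
    have hj : j ∈ (Finset.range k).filter (Zp k y) :=
      Finset.mem_filter.mpr ⟨Finset.mem_range.mpr hjk, hzj⟩
    have hsub : ({0, j} : Finset ℕ) ⊆ (Finset.range k).filter (Zp k y) := by
      intro x hx
      rcases Finset.mem_insert.mp hx with h | h
      · subst h; exact h0
      · rw [Finset.mem_singleton.mp h]; exact hj
    have hcard := Finset.card_le_card hsub
    rw [Finset.card_pair (by omega)] at hcard
    omega
  · intro h
    have : (Finset.range k).filter (Zp k y) = {0} := by
      ext j
      rw [Finset.mem_filter, Finset.mem_range, Finset.mem_singleton]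
      constructor
      · rintro ⟨hjk, hzj⟩
        by_contra hj0
        exact h j (by omega) hjk hzj
      · intro hj; subst hj
        exact ⟨hk1, (zp_zero_iff y).mpr hpos⟩
    rw [this, Finset.card_singleton]

lemma fz_eq {n k : ℕ} {y : ℕ → ℝ} (hk1 : 1 ≤ k) (hkn : k < n) (hpos : PosUpTo n y)
    (hzk : Zp n y k) (hmin : ∀ j, 0 < j → j < k → ¬ Zp n y j) :
    (Finset.range n).filter (Zp n y)
      = insert 0 (((Finset.range (n - k)).filter (Zp (n - k) (drop k y))).image (k + ·)) := by
  ext j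
  rw [Finset.mem_insert, Finset.mem_filter, Finset.mem_range]
  constructor
  · rintro ⟨hjn, hzj⟩
    rcases Nat.eq_zero_or_pos j with hj0 | hj0
    · left; exact hj0
    right
    have hjk : ¬ j < k := fun hc => hmin j hj0 hc hzj
    push_neg at hjk
    rw [Finset.mem_image]
    refine ⟨j - k, ?_, by omega⟩
    rw [Finset.mem_filter, Finset.mem_range]
    refine ⟨by omega, ?_⟩
    rw [zp_drop y (le_of_lt hkn)]
    have : k + (j - k) = j := by omega
    rwa [this]
  · intro h
    rcases h with h | h
    · subst h
      exact ⟨by omega, (zp_zero_iff y).mpr hpos⟩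
    rw [Finset.mem_image] at h
    obtain ⟨i, hi, hij⟩ := h
    rw [Finset.mem_filter, Finset.mem_range] at hi
    refine ⟨by omega, ?_⟩
    rw [← hij]
    exact (zp_drop y (le_of_lt hkn) i).mp hi.2

lemma acount_split {n k : ℕ} {y : ℕ → ℝ} (hk1 : 1 ≤ k) (hkn : k < n) (hpos : PosUpTo n y)
    (hzk : Zp n y k) (hmin : ∀ j, 0 < j → j < k → ¬ Zp n y j) :
    Acount n y = 1 + Acount (n - k) (drop k y) := by
  have hposd : PosUpTo (n - k) (drop k y) := posUpTo_drop_of_zp hzk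
  rw [acount_eq_zcard hpos, acount_eq_zcard hposd, fz_eq hk1 hkn hpos hzk hmin]
  have hnm : (0 : ℕ) ∉ ((Finset.range (n - k)).filter (Zp (n - k) (drop k y))).image (k + ·) := by
    intro hc
    rw [Finset.mem_image] at hc
    obtain ⟨i, _, hi⟩ := hc
    omega
  rw [Finset.card_insert_of_notMem hnm,
    Finset.card_image_of_injective _ (add_right_injective k)]
  omega

lemma key_decomp {n m : ℕ} (hm : 2 ≤ m) (y : ℕ → ℝ) :
    (PosUpTo n y ∧ Acount n y = m) ↔
    ∃ k, 1 ≤ k ∧ k < n ∧ (PosUpTo k y ∧ Acount k y = 1) ∧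
      (PosUpTo (n - k) (drop k y) ∧ Acount (n - k) (drop k y) = m - 1) := by
  constructor
  · rintro ⟨hpos, hA⟩
    have hn2 : 2 ≤ n := le_trans hm (hA ▸ acount_le y)
    set F := (Finset.range n).filter (Zp n y) with hF
    have hFcard : F.card = m := by rw [← acount_eq_zcard hpos]; exact hA
    have h0F : 0 ∈ F :=
      Finset.mem_filter.mpr ⟨Finset.mem_range.mpr (by omega), (zp_zero_iff y).mpr hpos⟩
    have hne : (F.erase 0).Nonempty := by
      rw [← Finset.card_pos, Finset.card_erase_of_mem h0F]
      omega
    set k := (F.erase 0).min' hne with hkdef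
    have hkF : k ∈ F.erase 0 := Finset.min'_mem _ _
    have hk0 : k ≠ 0 := (Finset.mem_erase.mp hkF).1
    have hkF' := (Finset.mem_erase.mp hkF).2
    rw [hF, Finset.mem_filter, Finset.mem_range] at hkF'
    have hkn : k < n := hkF'.1
    have hzk : Zp n y k := hkF'.2
    have hk1 : 1 ≤ k := by omega
    have hmin : ∀ j, 0 < j → j < k → ¬ Zp n y j := by
      intro j hj0 hjk hzj
      have : j ∈ F.erase 0 := Finset.mem_erase.mpr
        ⟨by omega, Finset.mem_filter.mpr ⟨Finset.mem_range.mpr (by omega), hzj⟩⟩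
      have := Finset.min'_le _ _ this
      omega
    refine ⟨k, hk1, hkn, ⟨posUpTo_restrict hpos (le_of_lt hkn), ?_⟩,
      posUpTo_drop_of_zp hzk, ?_⟩
    · rw [acount_one_iff hk1 (posUpTo_restrict hpos (le_of_lt hkn))]
      intro j hj0 hjk hzj
      exact hmin j hj0 hjk ((zp_first_block hzk (le_of_lt hkn) hjk).mpr hzj)
    · have := acount_split hk1 hkn hpos hzk hmin
      omega
  · rintro ⟨k, hk1, hkn, ⟨hp1, hA1⟩, hp2, hA2⟩
    have hpos : PosUpTo n y := posUpTo_of_blocks (le_of_lt hkn) hp1 hp2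
    have hzk : Zp n y k := zp_of_blocks (le_of_lt hkn) hp2
    have hmin : ∀ j, 0 < j → j < k → ¬ Zp n y j := by
      intro j hj0 hjk hzj
      exact (acount_one_iff hk1 hp1).mp hA1 j hj0 hjk
        ((zp_first_block hzk (le_of_lt hkn) hjk).mp hzj)
    refine ⟨hpos, ?_⟩
    rw [acount_split hk1 hkn hpos hzk hmin, hA2]
    omega

lemma key_unique {n k k' : ℕ} {y : ℕ → ℝ}
    (hk1 : 1 ≤ k) (hkn : k < n) (hp1 : PosUpTo k y) (hA1 : Acount k y = 1)
    (hp2 : PosUpTo (n - k) (drop k y))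
    (hk1' : 1 ≤ k') (hkn' : k' < n) (hp1' : PosUpTo k' y) (hA1' : Acount k' y = 1)
    (hp2' : PosUpTo (n - k') (drop k' y)) : k = k' := by
  rcases lt_trichotomy k k' with h | h | h
  · exfalso
    have hzk : Zp n y k := zp_of_blocks (le_of_lt hkn) hp2
    have hzk' : Zp n y k' := zp_of_blocks (le_of_lt hkn') hp2'
    have : Zp k' y k := (zp_first_block hzk' (le_of_lt hkn') h).mp hzk
    exact (acount_one_iff hk1' hp1').mp hA1' k (by omega) h this
  · exact h
  · exfalso
    have hzk : Zp n y k := zp_of_blocks (le_of_lt hkn) hp2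
    have hzk' : Zp n y k' := zp_of_blocks (le_of_lt hkn') hp2'
    have : Zp k y k' := (zp_first_block hzk (le_of_lt hkn) h).mp hzk'
    exact (acount_one_iff hk1 hp1).mp hA1 k' (by omega) h this


/-! ### Measurability infrastructure -/

def unfin (n : ℕ) (z : Fin n → ℝ) : ℕ → ℝ := fun i => if h : i < n then z ⟨i, h⟩ else 0

lemma measurable_unfin_apply (n i : ℕ) : Measurable fun z : Fin n → ℝ => unfin n z i := by
  rcases Nat.lt_or_ge i n with h | h
  · have : (fun z : Fin n → ℝ => unfin n z i) = fun z => z ⟨i, h⟩ := by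
      funext z; simp [unfin, h]
    rw [this]; exact measurable_pi_apply _
  · have : (fun z : Fin n → ℝ => unfin n z i) = fun _ => 0 := by
      funext z; simp [unfin, Nat.not_lt.mpr h]
    rw [this]; exact measurable_const

lemma measurable_psum_comp (n : ℕ) (w : ℕ → ℕ) (k : ℕ) :
    Measurable fun z : Fin n → ℝ => psum (fun j => unfin n z (w j)) k := by
  unfold psum
  exact Finset.measurable_sum _ (fun i _ => measurable_unfin_apply n (w i))

lemma measurableSet_posUpTo_comp (n m : ℕ) (w : ℕ → ℕ) :
    MeasurableSet {z : Fin n → ℝ | PosUpTo m (fun j => unfin n z (w j))} := by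
  have hset : {z : Fin n → ℝ | PosUpTo m (fun j => unfin n z (w j))}
      = ⋂ (k : ℕ), ⋂ (_ : 1 ≤ k), ⋂ (_ : k ≤ m),
          {z : Fin n → ℝ | 0 < psum (fun j => unfin n z (w j)) k} := by
    ext z; simp [PosUpTo, Set.mem_iInter]
  rw [hset]
  exact MeasurableSet.iInter fun k => MeasurableSet.iInter fun _ => MeasurableSet.iInter fun _ =>
    measurableSet_lt measurable_const (measurable_psum_comp n w k)

lemma measurable_acount_comp (n m : ℕ) (w : ℕ → ℕ) :
    Measurable fun z : Fin n → ℝ => Acount m (fun j => unfin n z (w j)) := by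
  have hrw : (fun z : Fin n → ℝ => Acount m (fun j => unfin n z (w j)))
      = fun z => ∑ r ∈ Finset.range m,
          if PosUpTo m (cyc m r fun j => unfin n z (w j)) then 1 else 0 :=
    funext fun z => Finset.card_filter _ _
  rw [hrw]
  refine Finset.measurable_sum _ (fun r _ => Measurable.ite ?_ measurable_const measurable_const)
  exact measurableSet_posUpTo_comp n m (fun i => w ((i + r) % m))

def posSet (n : ℕ) : Set (Fin n → ℝ) := {z | PosUpTo n (unfin n z)}

def posASet (n m : ℕ) : Set (Fin n → ℝ) := {z | PosUpTo n (unfin n z) ∧ Acount n (unfin n z) = m}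

def aSet (n m : ℕ) : Set (Fin n → ℝ) := {z | Acount n (unfin n z) = m}

lemma measurableSet_posSet (n : ℕ) : MeasurableSet (posSet n) :=
  measurableSet_posUpTo_comp n n id

lemma measurableSet_aSet (n m : ℕ) : MeasurableSet (aSet n m) :=
  measurable_acount_comp n n id (MeasurableSet.singleton m)

lemma measurableSet_posASet (n m : ℕ) : MeasurableSet (posASet n m) :=
  (measurableSet_posSet n).inter (measurableSet_aSet n m)

/-! ### Law of the increments vector -/

section Prob

variable {Ω : Type*} [MeasurableSpace Ω] (P : Measure Ω) [IsProbabilityMeasure P]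
    (X : ℕ → Ω → ℝ)

/-- the product measure on `Fin n → ℝ` with each factor the law of `X 0` -/
noncomputable def pimeas (n : ℕ) : Measure (Fin n → ℝ) :=
  Measure.pi (fun _ : Fin n => P.map (X 0))

lemma jl (hmeas : ∀ i, Measurable (X i))
    (hindep : iIndepFun X P)
    (hident : ∀ i, Measure.map (X i) P = Measure.map (X 0) P)
    (n : ℕ) (ι : Fin n → ℕ) (hι : Function.Injective ι) :
    P.map (fun ω (i : Fin n) => X (ι i) ω) = pimeas P X n := by
  have hprob : IsProbabilityMeasure (P.map (X 0)) :=
    Measure.isProbabilityMeasure_map (hmeas 0).aemeasurable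
  refine (Measure.pi_eq fun s hs => ?_).symm
  rw [Measure.map_apply (measurable_pi_lambda _ fun i => hmeas (ι i))
    (MeasurableSet.univ_pi hs)]
  classical
  -- express the preimage as an intersection over the image finset
  set sets : ℕ → Set ℝ := fun j => if h : ∃ i, ι i = j then s h.choose else Set.univ with hsets
  have hsets_eq : ∀ i, sets (ι i) = s i := by
    intro i
    have hex : ∃ i', ι i' = ι i := ⟨i, rfl⟩
    have := hex.choose_spec
    simp only [hsets, dif_pos hex]
    exact congrArg s (hι this)
  have hpre : (fun ω (i : Fin n) => X (ι i) ω) ⁻¹' Set.pi Set.univ s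
      = ⋂ j ∈ Finset.image ι Finset.univ, X j ⁻¹' sets j := by
    ext ω
    simp only [Set.mem_preimage, Set.mem_pi, Set.mem_univ, forall_true_left, Set.mem_iInter,
      Finset.mem_image, Finset.mem_univ, true_and]
    constructor
    · rintro h j ⟨i, rfl⟩
      rw [hsets_eq i]; exact h i
    · intro h i
      have := h (ι i) ⟨i, rfl⟩
      rwa [hsets_eq i] at this
  rw [hpre]
  rw [hindep.measure_inter_preimage_eq_mul (Finset.image ι Finset.univ)
    (fun j _ => by
      simp only [hsets]
      split_ifs with h
      · exact hs _
      · exact MeasurableSet.univ)]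
  rw [Finset.prod_image (fun i _ j _ h => hι h)]
  refine Finset.prod_congr rfl fun i _ => ?_
  rw [hsets_eq i, ← Measure.map_apply (hmeas (ι i)) (hs i), hident (ι i)]

lemma tr (hmeas : ∀ i, Measurable (X i))
    (hindep : iIndepFun X P)
    (hident : ∀ i, Measure.map (X i) P = Measure.map (X 0) P)
    (n : ℕ) (ι : Fin n → ℕ) (hι : Function.Injective ι) {C : Set (Fin n → ℝ)}
    (hC : MeasurableSet C) :
    P ((fun ω (i : Fin n) => X (ι i) ω) ⁻¹' C) = pimeas P X n C := by
  rw [← jl P X hmeas hindep hident n ι hι,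
    Measure.map_apply (measurable_pi_lambda _ fun i => hmeas (ι i)) hC]


lemma trPhi (hmeas : ∀ i, Measurable (X i))
    (hindep : iIndepFun X P)
    (hident : ∀ i, Measure.map (X i) P = Measure.map (X 0) P)
    (n : ℕ) (σ : ℕ → ℕ) (hσ : ∀ i < n, ∀ j < n, σ i = σ j → i = j)
    (Φ : (ℕ → ℝ) → Prop)
    (hdep : ∀ y y' : ℕ → ℝ, (∀ i < n, y i = y' i) → (Φ y ↔ Φ y'))
    (hC : MeasurableSet {z : Fin n → ℝ | Φ (unfin n z)}) :
    P {ω | Φ (fun j => X (σ j) ω)} = pimeas P X n {z | Φ (unfin n z)} := by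
  have hev : {ω | Φ (fun j => X (σ j) ω)}
      = (fun ω (i : Fin n) => X (σ i) ω) ⁻¹' {z | Φ (unfin n z)} := by
    ext ω
    simp only [Set.mem_setOf_eq, Set.mem_preimage]
    refine hdep _ _ (fun i hi => ?_)
    simp [unfin, hi]
  rw [hev]
  exact tr P X hmeas hindep hident n (fun i : Fin n => σ i)
    (fun i j h => Fin.ext (hσ i i.isLt j j.isLt h)) hC


lemma pimeas_prob (hmeas0 : Measurable (X 0)) (n : ℕ) :
    IsProbabilityMeasure (pimeas P X n) := by
  have : IsProbabilityMeasure (P.map (X 0)) := Measure.isProbabilityMeasure_map hmeas0.aemeasurable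
  unfold pimeas
  infer_instance

/-- partition of the positivity event according to the value of `Acount` -/
lemma pf1 (n : ℕ) (hn : 1 ≤ n) :
    pimeas P X n (posSet n) = ∑ m ∈ Finset.Icc 1 n, pimeas P X n (posASet n m) := by
  have huni : posSet n = ⋃ m ∈ Finset.Icc 1 n, posASet n m := by
    ext z
    simp only [posSet, posASet, Set.mem_setOf_eq, Set.mem_iUnion, Finset.mem_Icc]
    constructor
    · intro hp
      refine ⟨Acount n (unfin n z), ⟨?_, acount_le _⟩, hp, rfl⟩
      rw [acount_pos_iff hn]
      exact hp n hn le_rfl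
    · rintro ⟨m, _, hp, _⟩; exact hp
  rw [huni]
  refine measure_biUnion_finset ?_ (fun m _ => measurableSet_posASet n m)
  intro m1 h1 m2 h2 hne
  simp only [Set.disjoint_left]
  rintro z ⟨_, hz1⟩ ⟨_, hz2⟩
  exact hne (hz1 ▸ hz2 ▸ rfl)

/-- partition of the event `S_n > 0` according to the value of `Acount` -/
lemma pf2 (n : ℕ) (hn : 1 ≤ n) :
    pimeas P X n {z | 0 < psum (unfin n z) n} = ∑ m ∈ Finset.Icc 1 n, pimeas P X n (aSet n m) := by
  have huni : {z : Fin n → ℝ | 0 < psum (unfin n z) n} = ⋃ m ∈ Finset.Icc 1 n, aSet n m := by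
    ext z
    simp only [aSet, Set.mem_setOf_eq, Set.mem_iUnion, Finset.mem_Icc]
    constructor
    · intro hp
      exact ⟨Acount n (unfin n z), ⟨(acount_pos_iff hn _).mpr hp, acount_le _⟩, rfl⟩
    · rintro ⟨m, ⟨hm1, _⟩, hz⟩
      rw [← acount_pos_iff hn]
      omega
  rw [huni]
  refine measure_biUnion_finset ?_ (fun m _ => measurableSet_aSet n m)
  intro m1 h1 m2 h2 hne
  simp only [Set.disjoint_left]
  rintro z hz1 hz2
  simp only [aSet, Set.mem_setOf_eq] at hz1 hz2
  exact hne (hz1 ▸ hz2 ▸ rfl)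


lemma pf3 (hmeas : ∀ i, Measurable (X i))
    (hindep : iIndepFun X P)
    (hident : ∀ i, Measure.map (X i) P = Measure.map (X 0) P)
    (n m : ℕ) (hn : 1 ≤ n) :
    (n : ℝ≥0∞) * pimeas P X n (posASet n m) = (m : ℝ≥0∞) * pimeas P X n (aSet n m) := by
  set pp := pimeas P X n with hpp
  set B : ℕ → Set (Fin n → ℝ) := fun r => {z | PosUpTo n (cyc n r (unfin n z))} with hB
  have hBmeas : ∀ r, MeasurableSet (B r) := fun r =>
    measurableSet_posUpTo_comp n n (fun i => (i + r) % n)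
  have hDmeas := measurableSet_aSet n m
  -- Step A : each rotated event has the same measure as the unrotated one
  have hA : ∀ r, r < n → pp (B r ∩ aSet n m) = pp (posASet n m) := by
    intro r hr
    have hrotinj : ∀ i < n, ∀ j < n, (i + r) % n = (j + r) % n → i = j := by
      intro i hi j hj h
      have : i % n = j % n := Nat.ModEq.add_right_cancel' r h
      rwa [Nat.mod_eq_of_lt hi, Nat.mod_eq_of_lt hj] at this
    have hdep1 : ∀ y y' : ℕ → ℝ, (∀ i < n, y i = y' i) →
        ((PosUpTo n (cyc n r y) ∧ Acount n y = m) ↔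
          (PosUpTo n (cyc n r y') ∧ Acount n y' = m)) := by
      intro y y' h
      have hc : ∀ i < n, cyc n r y i = cyc n r y' i := fun i _ =>
        h _ (Nat.mod_lt _ (by omega))
      rw [acount_congr h, posUpTo_congr hc]
    have hdep2 : ∀ y y' : ℕ → ℝ, (∀ i < n, y i = y' i) →
        ((PosUpTo n y ∧ Acount n y = m) ↔ (PosUpTo n y' ∧ Acount n y' = m)) := by
      intro y y' h
      rw [acount_congr h, posUpTo_congr h]
    have h1 : pp (B r ∩ aSet n m)
        = P {ω | PosUpTo n (cyc n r (fun j => X j ω)) ∧ Acount n (fun j => X j ω) = m} := by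
      have hseteq : B r ∩ aSet n m
          = {z | PosUpTo n (cyc n r (unfin n z)) ∧ Acount n (unfin n z) = m} := rfl
      rw [hpp, hseteq, ← trPhi P X hmeas hindep hident n (fun j => j) (fun i _ j _ h => h)
        (fun y => PosUpTo n (cyc n r y) ∧ Acount n y = m) hdep1
        ((hBmeas r).inter hDmeas)]
    have h2 : {ω | PosUpTo n (cyc n r (fun j => X j ω)) ∧ Acount n (fun j => X j ω) = m}
        = {ω | PosUpTo n (fun j => X ((j + r) % n) ω) ∧
            Acount n (fun j => X ((j + r) % n) ω) = m} := by
      ext ω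
      have hcyc : (cyc n r (fun j => X j ω)) = fun j => X ((j + r) % n) ω := rfl
      have hac : Acount n (fun j => X ((j + r) % n) ω)
          = Acount n (fun j => X j ω) := by
        rw [← hcyc, acount_cyc]
      simp only [Set.mem_setOf_eq, hcyc, hac]
    have h3 : P {ω | PosUpTo n (fun j => X ((j + r) % n) ω) ∧
          Acount n (fun j => X ((j + r) % n) ω) = m} = pp (posASet n m) := by
      rw [hpp]
      exact trPhi P X hmeas hindep hident n (fun j => (j + r) % n) hrotinj
        (fun y => PosUpTo n y ∧ Acount n y = m) hdep2 (measurableSet_posASet n m)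
    rw [h1, h2, h3]
  -- Step B : counting
  have hcount : ∑ r ∈ Finset.range n, pp (B r ∩ aSet n m)
      = (m : ℝ≥0∞) * pp (aSet n m) := by
    have hind : ∀ r ∈ Finset.range n, pp (B r ∩ aSet n m)
        = ∫⁻ z, (B r ∩ aSet n m).indicator (fun _ => (1 : ℝ≥0∞)) z ∂pp := fun r _ =>
      (lintegral_indicator_one ((hBmeas r).inter hDmeas)).symm
    rw [Finset.sum_congr rfl hind, ← lintegral_finset_sum _ (fun r _ =>
      (measurable_const.indicator ((hBmeas r).inter hDmeas)))]
    have hpt : ∀ z, ∑ r ∈ Finset.range n, (B r ∩ aSet n m).indicator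
        (fun _ => (1 : ℝ≥0∞)) z = (aSet n m).indicator (fun _ => (m : ℝ≥0∞)) z := by
      intro z
      by_cases hz : z ∈ aSet n m
      · rw [Set.indicator_of_mem hz]
        have hterm : ∀ r, (B r ∩ aSet n m).indicator (fun _ => (1 : ℝ≥0∞)) z
            = if z ∈ B r then 1 else 0 := by
          intro r
          rw [Set.indicator_apply]
          by_cases hzb : z ∈ B r
          · rw [if_pos (Set.mem_inter hzb hz), if_pos hzb]
          · rw [if_neg (fun hc => hzb hc.1), if_neg hzb]
        rw [Finset.sum_congr rfl (fun r _ => hterm r)]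
        have hsum : (∑ r ∈ Finset.range n, if z ∈ B r then (1 : ℝ≥0∞) else 0)
            = (((Finset.range n).filter (fun r => z ∈ B r)).card : ℝ≥0∞) := by
          rw [Finset.card_filter, Nat.cast_sum]
          exact Finset.sum_congr rfl (fun r _ => by split_ifs <;> simp)
        rw [hsum]
        have : ((Finset.range n).filter (fun r => z ∈ B r)).card = Acount n (unfin n z) := rfl
        rw [this, hz]
      · rw [Set.indicator_of_notMem hz]
        refine Finset.sum_eq_zero (fun r _ => ?_)
        exact Set.indicator_of_notMem (fun hc => hz hc.2) _
    calc ∫⁻ z, ∑ r ∈ Finset.range n, (B r ∩ aSet n m).indicator (fun _ => (1:ℝ≥0∞)) z ∂pp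
        = ∫⁻ z, (aSet n m).indicator (fun _ => (m : ℝ≥0∞)) z ∂pp := by
          refine lintegral_congr (fun z => hpt z)
      _ = (m : ℝ≥0∞) * pp (aSet n m) := lintegral_indicator_const hDmeas _
  calc (n : ℝ≥0∞) * pp (posASet n m)
      = ∑ _r ∈ Finset.range n, pp (posASet n m) := by
        rw [Finset.sum_const, Finset.card_range, nsmul_eq_mul]
    _ = ∑ r ∈ Finset.range n, pp (B r ∩ aSet n m) :=
        (Finset.sum_congr rfl (fun r hr => (hA r (Finset.mem_range.mp hr)).symm))
    _ = (m : ℝ≥0∞) * pp (aSet n m) := hcount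


lemma probPosA (hmeas : ∀ i, Measurable (X i))
    (hindep : iIndepFun X P)
    (hident : ∀ i, Measure.map (X i) P = Measure.map (X 0) P)
    (N mm : ℕ) :
    P {ω | PosUpTo N (fun i => X i ω) ∧ Acount N (fun i => X i ω) = mm}
      = pimeas P X N (posASet N mm) := by
  exact trPhi P X hmeas hindep hident N (fun j => j) (fun i _ j _ h => h)
    (fun y => PosUpTo N y ∧ Acount N y = mm)
    (fun y y' h => by
      show (PosUpTo N y ∧ Acount N y = mm) ↔ (PosUpTo N y' ∧ Acount N y' = mm)
      rw [acount_congr h, posUpTo_congr h])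
    (measurableSet_posASet N mm)

lemma pf4 (hmeas : ∀ i, Measurable (X i))
    (hindep : iIndepFun X P)
    (hident : ∀ i, Measure.map (X i) P = Measure.map (X 0) P)
    (n m : ℕ) (hm : 2 ≤ m) (hn : 1 ≤ n) :
    pimeas P X n (posASet n m)
      = ∑ k ∈ Finset.Icc 1 (n - 1),
          pimeas P X k (posASet k 1) * pimeas P X (n - k) (posASet (n - k) (m - 1)) := by
  classical
  -- Ω-level events
  set U : ℕ → Ω → (ℕ → ℝ) := fun k ω i => X i ω with hU
  set E1 : ℕ → Set Ω := fun k => {ω | PosUpTo k (fun i => X i ω) ∧ Acount k (fun i => X i ω) = 1}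
    with hE1def
  set E2 : ℕ → Set Ω :=
    fun k => {ω | PosUpTo (n - k) (fun i => X (k + i) ω) ∧
      Acount (n - k) (fun i => X (k + i) ω) = m - 1} with hE2def
  -- preimage representations
  have hUk : ∀ k : ℕ, E1 k = (fun ω (i : Fin k) => X (i : ℕ) ω) ⁻¹' posASet k 1 := by
    intro k
    ext ω
    simp only [hE1def, Set.mem_setOf_eq, Set.mem_preimage, posASet]
    have hagree : ∀ i < k, (fun i => X i ω) i = unfin k (fun j : Fin k => X (j : ℕ) ω) i := by
      intro i hi; simp [unfin, hi]
    rw [acount_congr hagree, posUpTo_congr hagree]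
  have hVk : ∀ k : ℕ, E2 k = (fun ω (i : Fin (n - k)) => X (k + (i : ℕ)) ω) ⁻¹'
      posASet (n - k) (m - 1) := by
    intro k
    ext ω
    simp only [hE2def, Set.mem_setOf_eq, Set.mem_preimage, posASet]
    have hagree : ∀ i < n - k, (fun i => X (k + i) ω) i
        = unfin (n - k) (fun j : Fin (n - k) => X (k + (j : ℕ)) ω) i := by
      intro i hi; simp [unfin, hi]
    rw [acount_congr hagree, posUpTo_congr hagree]
  -- decomposition of the event
  have hdecomp : {ω | PosUpTo n (fun i => X i ω) ∧ Acount n (fun i => X i ω) = m}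
      = ⋃ k ∈ Finset.Icc 1 (n - 1), E1 k ∩ E2 k := by
    ext ω
    simp only [Set.mem_setOf_eq, Set.mem_iUnion, Finset.mem_Icc, Set.mem_inter_iff,
      hE1def, hE2def]
    rw [key_decomp hm]
    constructor
    · rintro ⟨k, hk1, hkn, h1, h2⟩
      exact ⟨k, ⟨hk1, by omega⟩, h1, h2⟩
    · rintro ⟨k, ⟨hk1, hkn⟩, h1, h2⟩
      refine ⟨k, hk1, ?_, h1, h2⟩
      -- from h2 : PosUpTo (n-k) ... ∧ Acount (n-k) ... = m-1 ≥ 1 we get k < n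
      by_contra hc
      push_neg at hc
      have : n - k = 0 := by omega
      rw [this] at h2
      have : Acount 0 (fun i => X (k + i) ω) = 0 := by
        simp [Acount]
      omega
  -- measurability and disjointness
  have hmeasE : ∀ k : ℕ, MeasurableSet (E1 k ∩ E2 k) := by
    intro k
    refine MeasurableSet.inter ?_ ?_
    · rw [hUk k]
      exact (measurable_pi_lambda _ fun i => hmeas _) (measurableSet_posASet k 1)
    · rw [hVk k]
      exact (measurable_pi_lambda _ fun i => hmeas _) (measurableSet_posASet (n - k) (m - 1))
  have hdisj : ∀ k1 ∈ Finset.Icc 1 (n-1), ∀ k2 ∈ Finset.Icc 1 (n-1), k1 ≠ k2 →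
      Disjoint (E1 k1 ∩ E2 k1) (E1 k2 ∩ E2 k2) := by
    intro k1 hk1 k2 hk2 hne
    rw [Finset.mem_Icc] at hk1 hk2
    rw [Set.disjoint_left]
    rintro ω ⟨h11, h21⟩ ⟨h12, h22⟩
    simp only [hE1def, hE2def, Set.mem_setOf_eq] at h11 h21 h12 h22
    exact hne (key_unique hk1.1 (by omega) h11.1 h11.2 h21.1
      hk2.1 (by omega) h12.1 h12.2 h22.1)
  -- put everything together
  rw [← probPosA P X hmeas hindep hident n m, hdecomp,
    measure_biUnion_finset (fun k1 hk1 k2 hk2 hne =>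
      hdisj k1 (Finset.mem_coe.mp hk1) k2 (Finset.mem_coe.mp hk2) hne)
      (fun k _ => hmeasE k)]
  refine Finset.sum_congr rfl (fun k hk => ?_)
  rw [Finset.mem_Icc] at hk
  -- independence of the two blocks
  set S : Finset ℕ := Finset.range k with hS
  set T : Finset ℕ := (Finset.range (n - k)).image (k + ·) with hT
  have hST : Disjoint S T := by
    rw [Finset.disjoint_left]
    intro a haS haT
    rw [hS, Finset.mem_range] at haS
    rw [hT, Finset.mem_image] at haT
    obtain ⟨j, _, hj⟩ := haT
    omega
  have hbase := hindep.indepFun_finset S T hST hmeas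
  have hφ : Measurable (fun (v : ↥S → ℝ) (i : Fin k) =>
      v ⟨(i : ℕ), Finset.mem_range.mpr i.isLt⟩) :=
    measurable_pi_lambda _ fun i => measurable_pi_apply _
  have hψ : Measurable (fun (v : ↥T → ℝ) (i : Fin (n - k)) =>
      v ⟨k + (i : ℕ), Finset.mem_image.mpr ⟨(i : ℕ), Finset.mem_range.mpr i.isLt, rfl⟩⟩) :=
    measurable_pi_lambda _ fun i => measurable_pi_apply _
  have hUV : IndepFun (fun ω (i : Fin k) => X (i : ℕ) ω)
      (fun ω (i : Fin (n - k)) => X (k + (i : ℕ)) ω) P := hbase.comp hφ hψ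
  have hmul := (indepFun_iff_measure_inter_preimage_eq_mul.mp hUV)
    (posASet k 1) (posASet (n - k) (m - 1))
    (measurableSet_posASet k 1) (measurableSet_posASet (n - k) (m - 1))
  calc P (E1 k ∩ E2 k)
      = P ((fun ω (i : Fin k) => X (i : ℕ) ω) ⁻¹' posASet k 1
          ∩ (fun ω (i : Fin (n - k)) => X (k + (i : ℕ)) ω) ⁻¹' posASet (n - k) (m - 1)) := by
        rw [hUk k, hVk k]
    _ = P ((fun ω (i : Fin k) => X (i : ℕ) ω) ⁻¹' posASet k 1)
        * P ((fun ω (i : Fin (n - k)) => X (k + (i : ℕ)) ω) ⁻¹' posASet (n - k) (m - 1)) := hmul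
    _ = pimeas P X k (posASet k 1) * pimeas P X (n - k) (posASet (n - k) (m - 1)) := by
        rw [tr P X hmeas hindep hident k (fun i : Fin k => (i : ℕ))
            (fun a b h => Fin.ext h) (measurableSet_posASet k 1),
          tr P X hmeas hindep hident (n - k) (fun i : Fin (n - k) => k + (i : ℕ))
            (fun a b h => Fin.ext (Nat.add_left_cancel h)) (measurableSet_posASet (n - k) (m - 1))]

end Prob

/-! ### Analytic part: from the combinatorial identities to Spitzer's formula -/

lemma sum_shift (f : ℕ → ℝ) (n : ℕ) :
    ∑ m ∈ Finset.range n, f (m + 1) = ∑ m ∈ Finset.Icc 1 n, f m := by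
  induction n with
  | zero => simp
  | succ k ih => rw [Finset.sum_range_succ, ih, Finset.sum_Icc_succ_top (by omega)]

theorem analytic_main (h : ℕ → ℕ → ℝ) (q b : ℕ → ℝ)
    (hh0 : ∀ m n, 0 ≤ h m n) (hh1 : ∀ m n, h m n ≤ 1)
    (hhz : ∀ m n, n < m → h m n = 0)
    (hq0 : q 0 = 1) (hqnn : ∀ n, 0 ≤ q n) (hq1 : ∀ n, q n ≤ 1)
    (hqh : ∀ n, 1 ≤ n → q n = ∑ m ∈ Finset.Icc 1 n, h m n)
    (hbh : ∀ n, 1 ≤ n → b n = ∑ m ∈ Finset.Icc 1 n, ((n : ℝ) / m) * h m n)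
    (hconv : ∀ m n, 2 ≤ m → h m n = ∑ k ∈ Finset.Icc 1 (n - 1), h 1 k * h (m - 1) (n - k))
    (s : ℝ) (hs : |s| < 1) :
    ∑' n : ℕ, s ^ n * q n = Real.exp (∑' n : ℕ, s ^ (n + 1) * b (n + 1) / (n + 1)) := by
  set t := |s| with ht
  have ht0 : 0 ≤ t := abs_nonneg s
  have hgeo : Summable (fun n : ℕ => t ^ n) := summable_geometric_of_lt_one ht0 hs
  -- summability of rows
  have hrow : ∀ (m : ℕ) (x : ℝ), |x| ≤ t → Summable (fun n => h m n * x ^ n) := by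
    intro m x hx
    refine Summable.of_norm_bounded hgeo (fun n => ?_)
    rw [Real.norm_eq_abs, abs_mul, abs_of_nonneg (hh0 m n), abs_pow]
    calc h m n * |x| ^ n ≤ 1 * |x| ^ n :=
          mul_le_mul_of_nonneg_right (hh1 m n) (pow_nonneg (abs_nonneg x) n)
      _ = |x| ^ n := one_mul _
      _ ≤ t ^ n := pow_le_pow_left₀ (abs_nonneg x) hx n
  have hnormval : ∀ (m n : ℕ) (x : ℝ), ‖h m n * x ^ n‖ = h m n * |x| ^ n := by
    intro m n x
    rw [Real.norm_eq_abs, abs_mul, abs_of_nonneg (hh0 m n), abs_pow]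
  have habs : ∀ (m : ℕ) (x : ℝ), |x| ≤ t → Summable (fun n => ‖h m n * x ^ n‖) := by
    intro m x hx
    have h2 : |(|x|)| ≤ t := by rwa [abs_abs]
    exact (hrow m |x| h2).congr (fun n => (hnormval m n x).symm)
  -- power identity for iterated convolutions
  have hGsum : ∀ (x : ℝ), |x| ≤ t → ∀ (m : ℕ), 1 ≤ m →
      (∑' n, h m n * x ^ n) = (∑' n, h 1 n * x ^ n) ^ m := by
    intro x hx
    refine Nat.le_induction ?_ ?_
    · rw [pow_one]
    · intro m hm ih
      have hc := tsum_mul_tsum_eq_tsum_sum_range_of_summable_norm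
        (habs 1 x hx) (habs m x hx)
      have hterm : ∀ n : ℕ, (∑ k ∈ Finset.range (n + 1),
          (h 1 k * x ^ k) * (h m (n - k) * x ^ (n - k))) = h (m + 1) n * x ^ n := by
        intro n
        have e1 : ∀ k ∈ Finset.range (n + 1),
            (h 1 k * x ^ k) * (h m (n - k) * x ^ (n - k))
              = (h 1 k * h m (n - k)) * x ^ n := by
          intro k hk
          rw [Finset.mem_range] at hk
          have hxp : x ^ k * x ^ (n - k) = x ^ n := by
            rw [← pow_add]
            congr 1
            omega
          calc (h 1 k * x ^ k) * (h m (n - k) * x ^ (n - k))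
              = (h 1 k * h m (n - k)) * (x ^ k * x ^ (n - k)) := by ring
            _ = (h 1 k * h m (n - k)) * x ^ n := by rw [hxp]
        rw [Finset.sum_congr rfl e1, ← Finset.sum_mul]
        congr 1
        have hsub : Finset.Icc 1 (n - 1) ⊆ Finset.range (n + 1) := by
          intro k hk
          rw [Finset.mem_Icc] at hk
          rw [Finset.mem_range]
          omega
        rw [← Finset.sum_subset hsub (fun k hk hnk => ?_)]
        · rw [hconv (m + 1) n (by omega)]
          simp only [Nat.add_sub_cancel]
        · rw [Finset.mem_range] at hk
          rw [Finset.mem_Icc] at hnk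
          push_neg at hnk
          rcases Nat.eq_zero_or_pos k with hk0 | hk0
          · subst hk0
            rw [hhz 1 0 (by omega), zero_mul]
          · have hkn : k = n := by omega
            subst hkn
            rw [Nat.sub_self, hhz m 0 (by omega), mul_zero]
      rw [pow_succ, ← ih, ← tsum_congr hterm, ← hc]
      ring
  -- positivity bound : the generating function of h 1 · at t is < 1
  set Gt := ∑' n, h 1 n * t ^ n with hGtdef
  have hGt0 : 0 ≤ Gt :=
    tsum_nonneg (fun n => mul_nonneg (hh0 1 n) (pow_nonneg ht0 n))
  have hQt : Summable (fun n => q n * t ^ n) := by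
    refine Summable.of_norm_bounded hgeo (fun n => ?_)
    rw [Real.norm_eq_abs, abs_mul, abs_of_nonneg (hqnn n), abs_pow, abs_of_nonneg ht0]
    calc q n * t ^ n ≤ 1 * t ^ n :=
          mul_le_mul_of_nonneg_right (hq1 n) (pow_nonneg ht0 n)
      _ = t ^ n := one_mul _
  have hkey : ∀ M : ℕ, (∑ m ∈ Finset.Icc 1 M, Gt ^ m) ≤ ∑' n, q n * t ^ n := by
    intro M
    have hterm : ∀ m ∈ Finset.Icc 1 M, Gt ^ m = ∑' n, h m n * t ^ n := by
      intro m hm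
      rw [Finset.mem_Icc] at hm
      rw [← hGsum t (by rw [abs_of_nonneg ht0]) m hm.1]
    rw [Finset.sum_congr rfl hterm, ← Summable.tsum_finsetSum (fun m _ => hrow m t (by rw [abs_of_nonneg ht0]))]
    refine Summable.tsum_le_tsum (fun n => ?_)
      (summable_sum (fun m _ => hrow m t (by rw [abs_of_nonneg ht0]))) hQt
    rw [← Finset.sum_mul]
    have hsle : (∑ m ∈ Finset.Icc 1 M, h m n) ≤ q n := by
      rcases Nat.eq_zero_or_pos n with hn0 | hn0
      · subst hn0
        rw [Finset.sum_eq_zero (fun m hm => hhz m 0 (by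
          rw [Finset.mem_Icc] at hm; omega))]
        rw [hq0]; norm_num
      · rw [hqh n hn0]
        have h1 : (∑ m ∈ Finset.Icc 1 M, h m n)
            = ∑ m ∈ Finset.Icc 1 M ∩ Finset.Icc 1 n, h m n := by
          refine (Finset.sum_subset Finset.inter_subset_left (fun m hm hnm => ?_)).symm
          rw [Finset.mem_Icc] at hm
          have : ¬ m ∈ Finset.Icc 1 n := fun hc => hnm (Finset.mem_inter.mpr ⟨by
            rw [Finset.mem_Icc]; exact ⟨hm.1, hm.2⟩, hc⟩)
          rw [Finset.mem_Icc] at this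
          push_neg at this
          exact hhz m n (by omega)
        rw [h1]
        exact Finset.sum_le_sum_of_subset_of_nonneg Finset.inter_subset_right
          (fun m _ _ => hh0 m n)
    exact mul_le_mul_of_nonneg_right hsle (pow_nonneg ht0 n)
  have hGtlt : Gt < 1 := by
    by_contra hc
    push_neg at hc
    obtain ⟨M, hM⟩ := exists_nat_gt (∑' n, q n * t ^ n)
    have h1 : (M : ℝ) ≤ ∑ m ∈ Finset.Icc 1 M, Gt ^ m := by
      calc (M : ℝ) = ∑ _m ∈ Finset.Icc 1 M, (1 : ℝ) := by
            rw [Finset.sum_const, Nat.card_Icc]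
            simp
        _ ≤ ∑ m ∈ Finset.Icc 1 M, Gt ^ m :=
            Finset.sum_le_sum (fun m _ => one_le_pow₀ hc)
    have := le_trans h1 (hkey M)
    linarith
  -- the generating function at s
  set G := ∑' n, h 1 n * s ^ n with hGdef
  have hGabs : |G| ≤ Gt := by
    have h1 : ‖∑' n, h 1 n * s ^ n‖ ≤ ∑' n, ‖h 1 n * s ^ n‖ :=
      norm_tsum_le_tsum_norm (habs 1 s le_rfl)
    rw [Real.norm_eq_abs] at h1
    calc |G| ≤ ∑' n, ‖h 1 n * s ^ n‖ := h1
      _ = Gt := tsum_congr (fun n => hnormval 1 n s)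
  have hGlt : |G| < 1 := lt_of_le_of_lt hGabs hGtlt
  have h1G : 0 < 1 - G := by
    have := abs_lt.mp hGlt
    linarith
  have hrowS : ∀ m : ℕ, Summable (fun n => h m n * s ^ n) := fun m => hrow m s le_rfl
  have hGm : ∀ m : ℕ, 1 ≤ m → (∑' n, h m n * s ^ n) = G ^ m := fun m hm =>
    hGsum s le_rfl m hm
  have hGtm : ∀ m : ℕ, 1 ≤ m → (∑' n, h m n * t ^ n) = Gt ^ m := fun m hm =>
    hGsum t (by rw [abs_of_nonneg ht0]) m hm
  have hsumGt : Summable (fun m : ℕ => Gt ^ (m + 1)) := by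
    have hbase := (summable_geometric_of_lt_one hGt0 hGtlt).mul_right Gt
    refine hbase.congr (fun m => ?_)
    rw [← pow_succ]
  -- double sum identity for Q
  have hd : Summable (Function.uncurry fun m n => h (m + 1) n * s ^ n) := by
    refine Summable.of_norm ?_
    refine (summable_prod_of_nonneg (fun p => norm_nonneg _)).mpr
      ⟨fun m => habs (m + 1) s le_rfl, ?_⟩
    have hval : ∀ m : ℕ, (∑' n, ‖h (m + 1) n * s ^ n‖) = Gt ^ (m + 1) := by
      intro m
      rw [tsum_congr (fun n => hnormval (m + 1) n s), hGtm (m + 1) (by omega)]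
    exact hsumGt.congr (fun m => (hval m).symm)
  have hfib : ∀ n : ℕ, Summable (fun m => h (m + 1) n * s ^ n) := by
    intro n
    refine summable_of_ne_finset_zero (s := Finset.range n) (fun m hm => ?_)
    rw [Finset.mem_range] at hm
    push_neg at hm
    rw [hhz (m + 1) n (by omega), zero_mul]
  have hQiter : (∑' (n : ℕ), ∑' (m : ℕ), h (m + 1) n * s ^ n) = (1 - G)⁻¹ * G := by
    have hswap : (∑' (n : ℕ), ∑' (m : ℕ), h (m + 1) n * s ^ n)
        = ∑' (m : ℕ), ∑' (n : ℕ), h (m + 1) n * s ^ n :=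
      Summable.tsum_comm' hd (fun m => hrowS (m + 1)) hfib
    rw [hswap]
    have hm1 : ∀ m : ℕ, (∑' n, h (m + 1) n * s ^ n) = G ^ m * G := by
      intro m
      rw [hGm (m + 1) (by omega), pow_succ]
    rw [tsum_congr hm1]
    have hgeoG : (∑' (m : ℕ), G ^ m) = (1 - G)⁻¹ :=
      tsum_geometric_of_norm_lt_one (by rwa [Real.norm_eq_abs])
    calc (∑' (m : ℕ), G ^ m * G) = (∑' (m : ℕ), G ^ m) * G := tsum_mul_right
      _ = (1 - G)⁻¹ * G := by rw [hgeoG]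
  have hQterm : ∀ n : ℕ, (∑' (m : ℕ), h (m + 1) n * s ^ n)
      = q n * s ^ n - (if n = 0 then 1 else 0) := by
    intro n
    rcases Nat.eq_zero_or_pos n with hn0 | hn0
    · subst hn0
      rw [if_pos rfl]
      have hz : ∀ m : ℕ, h (m + 1) 0 * s ^ 0 = 0 := fun m => by
        rw [hhz (m + 1) 0 (by omega), zero_mul]
      rw [tsum_congr hz, tsum_zero, hq0]
      norm_num
    · rw [if_neg (by omega)]
      have hvan : ∀ m ∉ Finset.range n, h (m + 1) n * s ^ n = 0 := by
        intro m hm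
        rw [Finset.mem_range] at hm
        push_neg at hm
        rw [hhz (m + 1) n (by omega), zero_mul]
      rw [tsum_eq_sum hvan, ← Finset.sum_mul]
      rw [sum_shift (fun m => h m n) n, ← hqh n hn0, sub_zero]
  have hQsummable : Summable (fun n => q n * s ^ n) := by
    refine Summable.of_norm_bounded hgeo (fun n => ?_)
    rw [Real.norm_eq_abs, abs_mul, abs_of_nonneg (hqnn n), abs_pow]
    calc q n * |s| ^ n ≤ 1 * |s| ^ n :=
          mul_le_mul_of_nonneg_right (hq1 n) (pow_nonneg (abs_nonneg s) n)
      _ = t ^ n := one_mul _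
  have hQval : (∑' n, q n * s ^ n) = (1 - G)⁻¹ := by
    have hind : Summable (fun n : ℕ => if n = 0 then (1 : ℝ) else 0) :=
      summable_of_ne_finset_zero (s := {0}) (fun n hn => by
        rw [Finset.mem_singleton] at hn
        rw [if_neg hn])
    have h2 : (∑' (n : ℕ), ∑' (m : ℕ), h (m + 1) n * s ^ n)
        = (∑' n, q n * s ^ n) - 1 := by
      rw [tsum_congr hQterm, Summable.tsum_sub hQsummable hind, tsum_ite_eq 0 (fun _ => (1 : ℝ))]
    have h3 : (∑' n, q n * s ^ n) - 1 = (1 - G)⁻¹ * G := by rw [← h2, hQiter]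
    have hne : (1 : ℝ) - G ≠ 0 := ne_of_gt h1G
    have h4 : (1 - G)⁻¹ * G = (1 - G)⁻¹ - 1 := by
      field_simp
      ring
    linarith
  -- double sum identity for B
  have hBrowS : ∀ m : ℕ, Summable (fun n => h (m + 1) (n + 1) * s ^ (n + 1) / (m + 1)) := by
    intro m
    have h1 : Summable (fun n => h (m + 1) (n + 1) * s ^ (n + 1)) :=
      (hrowS (m + 1)).comp_injective (add_left_injective 1)
    exact h1.div_const _
  have hBsum_n : ∀ (x : ℝ), |x| ≤ t → ∀ m : ℕ,
      (∑' n, h (m + 1) (n + 1) * x ^ (n + 1)) = (∑' n, h 1 n * x ^ n) ^ (m + 1) := by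
    intro x hx m
    have h0 : h (m + 1) 0 * x ^ 0 = 0 := by rw [hhz (m + 1) 0 (by omega), zero_mul]
    have hza := Summable.tsum_eq_zero_add (hrow (m + 1) x hx)
    rw [h0, zero_add] at hza
    rw [← hza, hGsum x hx (m + 1) (by omega)]
  have he : Summable (Function.uncurry fun m n => h (m + 1) (n + 1) * s ^ (n + 1) / (m + 1)) := by
    refine Summable.of_norm ?_
    refine (summable_prod_of_nonneg (fun p => norm_nonneg _)).mpr ⟨?_, ?_⟩
    · intro m
      refine Summable.of_norm_bounded
        ((hrow (m + 1) t (by rw [abs_of_nonneg ht0])).comp_injective (add_left_injective 1))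
        (fun n => ?_)
      simp only [Function.uncurry, Function.comp_apply]
      rw [norm_norm, Real.norm_eq_abs, abs_div, abs_mul, abs_of_nonneg (hh0 _ _), abs_pow]
      have hden : (1 : ℝ) ≤ |(m : ℝ) + 1| := by
        rw [abs_of_nonneg (by positivity)]
        have : (0:ℝ) ≤ m := Nat.cast_nonneg m
        linarith
      calc h (m + 1) (n + 1) * |s| ^ (n + 1) / |(m : ℝ) + 1|
          ≤ h (m + 1) (n + 1) * |s| ^ (n + 1) / 1 := by
            gcongr
            exact mul_nonneg (hh0 _ _) (pow_nonneg (abs_nonneg s) _)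
        _ = h (m + 1) (n + 1) * t ^ (n + 1) := by rw [div_one]
    · have hbound : ∀ m : ℕ, (∑' n, ‖h (m + 1) (n + 1) * s ^ (n + 1) / (m + 1)‖)
          ≤ Gt ^ (m + 1) := by
        intro m
        have hmaj : Summable (fun n => h (m + 1) (n + 1) * t ^ (n + 1)) :=
          (hrow (m + 1) t (by rw [abs_of_nonneg ht0])).comp_injective (add_left_injective 1)
        have hle : ∀ n : ℕ, ‖h (m + 1) (n + 1) * s ^ (n + 1) / (m + 1)‖
            ≤ h (m + 1) (n + 1) * t ^ (n + 1) := by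
          intro n
          rw [Real.norm_eq_abs, abs_div, abs_mul, abs_of_nonneg (hh0 _ _), abs_pow]
          have hden : (1 : ℝ) ≤ |(m : ℝ) + 1| := by
            rw [abs_of_nonneg (by positivity)]
            have : (0:ℝ) ≤ m := Nat.cast_nonneg m
            linarith
          calc h (m + 1) (n + 1) * |s| ^ (n + 1) / |(m : ℝ) + 1|
              ≤ h (m + 1) (n + 1) * |s| ^ (n + 1) / 1 := by
                gcongr
                exact mul_nonneg (hh0 _ _) (pow_nonneg (abs_nonneg s) _)
            _ = h (m + 1) (n + 1) * t ^ (n + 1) := by rw [div_one]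
        have hsummn : Summable (fun n => ‖h (m + 1) (n + 1) * s ^ (n + 1) / (m + 1)‖) :=
          Summable.of_norm_bounded hmaj (fun n => by rw [norm_norm]; exact hle n)
        calc (∑' n, ‖h (m + 1) (n + 1) * s ^ (n + 1) / (m + 1)‖)
            ≤ ∑' n, h (m + 1) (n + 1) * t ^ (n + 1) := Summable.tsum_le_tsum hle hsummn hmaj
          _ = Gt ^ (m + 1) := hBsum_n t (by rw [abs_of_nonneg ht0]) m
      refine Summable.of_nonneg_of_le (fun m => tsum_nonneg (fun n => norm_nonneg _))
        hbound hsumGt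
  have hBfib : ∀ n : ℕ, Summable (fun m => h (m + 1) (n + 1) * s ^ (n + 1) / (m + 1)) := by
    intro n
    refine summable_of_ne_finset_zero (s := Finset.range (n + 1)) (fun m hm => ?_)
    rw [Finset.mem_range] at hm
    push_neg at hm
    rw [hhz (m + 1) (n + 1) (by omega), zero_mul, zero_div]
  have hBiter : (∑' (n : ℕ), ∑' (m : ℕ), h (m + 1) (n + 1) * s ^ (n + 1) / (m + 1))
      = - Real.log (1 - G) := by
    have hswap := Summable.tsum_comm' he hBrowS hBfib
    rw [hswap]
    have hm1 : ∀ m : ℕ, (∑' n, h (m + 1) (n + 1) * s ^ (n + 1) / (m + 1))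
        = G ^ (m + 1) / (m + 1) := by
      intro m
      rw [tsum_div_const, hBsum_n s le_rfl m]
    rw [tsum_congr hm1]
    exact (Real.hasSum_pow_div_log_of_abs_lt_one hGlt).tsum_eq
  have hBterm : ∀ n : ℕ, (∑' (m : ℕ), h (m + 1) (n + 1) * s ^ (n + 1) / (m + 1))
      = s ^ (n + 1) * b (n + 1) / (n + 1) := by
    intro n
    have hvan : ∀ m ∉ Finset.range (n + 1), h (m + 1) (n + 1) * s ^ (n + 1) / (m + 1) = 0 := by
      intro m hm
      rw [Finset.mem_range] at hm
      push_neg at hm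
      rw [hhz (m + 1) (n + 1) (by omega), zero_mul, zero_div]
    rw [tsum_eq_sum hvan]
    have hre : (∑ m ∈ Finset.range (n + 1), h (m + 1) (n + 1) * s ^ (n + 1) / (m + 1))
        = ∑ m ∈ Finset.Icc 1 (n + 1), h m (n + 1) * s ^ (n + 1) / m := by
      rw [← sum_shift (fun m => h m (n + 1) * s ^ (n + 1) / m) (n + 1)]
      refine Finset.sum_congr rfl (fun i _ => ?_)
      push_cast
      ring
    rw [hre, hbh (n + 1) (by omega), Finset.mul_sum, Finset.sum_div]
    refine Finset.sum_congr rfl (fun m hm => ?_)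
    rw [Finset.mem_Icc] at hm
    have hm0 : (m : ℝ) ≠ 0 := Nat.cast_ne_zero.mpr (by omega)
    have hn0 : ((n : ℕ) : ℝ) + 1 ≠ 0 := by positivity
    push_cast
    field_simp
  -- conclude
  have hRHS : (∑' n : ℕ, s ^ (n + 1) * b (n + 1) / (n + 1)) = - Real.log (1 - G) := by
    rw [← hBiter]
    exact tsum_congr (fun n => (hBterm n).symm)
  rw [hRHS, Real.exp_neg, Real.exp_log h1G, ← hQval]
  exact tsum_congr (fun n => mul_comm (s ^ n) (q n))

end SpitzerAux


open SpitzerAux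

/-- Spitzer's identity: for a random walk `S_n` with i.i.d. increments,
`b_n = P(S_n > 0)` and `q_n = P(T₁⁻ > n) = P(S_1 > 0, ..., S_n > 0)` (`q_0 = 1`)
satisfy `Σ_{n≥0} s^n q_n = exp{Σ_{n≥1} s^n b_n / n}` for `|s| < 1`. -/
theorem stmt_12 {Ω : Type*} [MeasurableSpace Ω] (P : Measure Ω) [IsProbabilityMeasure P]
    (X : ℕ → Ω → ℝ) (hmeas : ∀ i, Measurable (X i))
    (hindep : iIndepFun X P)
    (hident : ∀ i, Measure.map (X i) P = Measure.map (X 0) P)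
    (S : ℕ → Ω → ℝ) (hS : ∀ n ω, S n ω = ∑ i ∈ Finset.range n, X i ω)
    (b q : ℕ → ℝ)
    (hb : ∀ n, b n = (P {ω | 0 < S n ω}).toReal)
    (hq : ∀ n, q n = (P {ω | ∀ j, 1 ≤ j → j ≤ n → 0 < S j ω}).toReal)
    (s : ℝ) (hs : |s| < 1) :
    ∑' n : ℕ, s ^ n * q n
      = Real.exp (∑' n : ℕ, s ^ (n + 1) * b (n + 1) / (n + 1)) := by
  classical
  have hprob : ∀ n, IsProbabilityMeasure (pimeas P X n) := pimeas_prob P X (hmeas 0)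
  set hseq : ℕ → ℕ → ℝ := fun m n => (pimeas P X n (posASet n m)).toReal with hhseq
  have htop : ∀ n (C : Set (Fin n → ℝ)), pimeas P X n C ≠ ⊤ := by
    intro n C
    have := hprob n
    exact measure_ne_top _ _
  -- basic S-event identifications
  have hSpsum : ∀ (j : ℕ) (ω : Ω), S j ω = psum (fun i => X i ω) j := by
    intro j ω
    rw [hS j ω]
    rfl
  have hqset : ∀ n : ℕ, {ω | ∀ j, 1 ≤ j → j ≤ n → 0 < S j ω}
      = {ω | PosUpTo n (fun i => X i ω)} := by
    intro n
    ext ω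
    simp only [Set.mem_setOf_eq, PosUpTo]
    refine forall_congr' fun j => forall_congr' fun _ => forall_congr' fun _ => ?_
    rw [hSpsum j ω]
  have hbset : ∀ n : ℕ, {ω | 0 < S n ω} = {ω | 0 < psum (fun i => X i ω) n} := by
    intro n
    ext ω
    simp only [Set.mem_setOf_eq]
    rw [hSpsum n ω]
  -- transfer of the two base events
  have hqtrans : ∀ n : ℕ, P {ω | PosUpTo n (fun i => X i ω)} = pimeas P X n (posSet n) := by
    intro n
    exact trPhi P X hmeas hindep hident n (fun j => j) (fun i _ j _ h => h)
      (PosUpTo n) (fun y y' hyy => posUpTo_congr hyy) (measurableSet_posSet n)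
  have hbtrans : ∀ n : ℕ, P {ω | 0 < psum (fun i => X i ω) n}
      = pimeas P X n {z | 0 < psum (unfin n z) n} := by
    intro n
    refine trPhi P X hmeas hindep hident n (fun j => j) (fun i _ j _ h => h)
      (fun y => 0 < psum y n) (fun y y' hyy => by
        show (0 < psum y n) ↔ (0 < psum y' n)
        rw [psum_congr hyy le_rfl]) ?_
    exact measurableSet_lt measurable_const (measurable_psum_comp n id n)
  -- hypotheses of the analytic lemma
  have hh0 : ∀ m n, 0 ≤ hseq m n := fun m n => ENNReal.toReal_nonneg
  have hh1 : ∀ m n, hseq m n ≤ 1 := by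
    intro m n
    have h1 : pimeas P X n (posASet n m) ≤ 1 := by
      have := hprob n
      exact prob_le_one
    calc hseq m n ≤ (1 : ℝ≥0∞).toReal := ENNReal.toReal_mono (by simp) h1
      _ = 1 := by simp
  have hhz : ∀ m n, n < m → hseq m n = 0 := by
    intro m n hnm
    have hempty : posASet n m = ∅ := by
      ext z
      simp only [posASet, Set.mem_setOf_eq, Set.mem_empty_iff_false, iff_false, not_and]
      intro _ hA
      have := acount_le (n := n) (unfin n z)
      omega
    rw [hhseq]
    simp only [hempty, measure_empty, ENNReal.toReal_zero]
  have hq0 : q 0 = 1 := by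
    rw [hq 0]
    have : {ω : Ω | ∀ j, 1 ≤ j → j ≤ 0 → 0 < S j ω} = Set.univ := by
      ext ω
      simp only [Set.mem_setOf_eq, Set.mem_univ, iff_true]
      intro j h1 h2
      omega
    rw [this, measure_univ]
    simp
  have hqnn : ∀ n, 0 ≤ q n := fun n => by rw [hq n]; exact ENNReal.toReal_nonneg
  have hq1 : ∀ n, q n ≤ 1 := by
    intro n
    rw [hq n]
    calc (P _).toReal ≤ (1 : ℝ≥0∞).toReal := ENNReal.toReal_mono (by simp) prob_le_one
      _ = 1 := by simp
  have hqh : ∀ n, 1 ≤ n → q n = ∑ m ∈ Finset.Icc 1 n, hseq m n := by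
    intro n hn
    rw [hq n, hqset n, hqtrans n, pf1 P X n hn, ENNReal.toReal_sum (fun m _ => htop n _)]
  have hbh : ∀ n, 1 ≤ n → b n = ∑ m ∈ Finset.Icc 1 n, ((n : ℝ) / m) * hseq m n := by
    intro n hn
    rw [hb n, hbset n, hbtrans n, pf2 P X n hn, ENNReal.toReal_sum (fun m _ => htop n _)]
    refine Finset.sum_congr rfl (fun m hm => ?_)
    rw [Finset.mem_Icc] at hm
    have hm0 : (m : ℝ) ≠ 0 := Nat.cast_ne_zero.mpr (by omega)
    have h3 := pf3 P X hmeas hindep hident n m hn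
    have h4 : (n : ℝ) * hseq m n = (m : ℝ) * (pimeas P X n (aSet n m)).toReal := by
      have := congrArg ENNReal.toReal h3
      rw [ENNReal.toReal_mul, ENNReal.toReal_mul] at this
      simpa using this
    field_simp
    linarith [h4]
  have hconv : ∀ m n, 2 ≤ m →
      hseq m n = ∑ k ∈ Finset.Icc 1 (n - 1), hseq 1 k * hseq (m - 1) (n - k) := by
    intro m n hm
    rcases Nat.eq_zero_or_pos n with hn0 | hn0
    · subst hn0
      rw [hhz m 0 (by omega)]
      simp
    · rw [hhseq]
      simp only
      rw [pf4 P X hmeas hindep hident n m hm hn0,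
        ENNReal.toReal_sum (fun k _ => by
          exact ENNReal.mul_ne_top (htop k _) (htop (n - k) _))]
      exact Finset.sum_congr rfl (fun k _ => ENNReal.toReal_mul)
  exact analytic_main hseq q b hh0 hh1 hhz hq0 hqnn hq1 hqh hbh hconv s hs
end

section
/- Let S_n be a random walk with i.i.d. increments satisfying E X < 0 and P(X > 0) > 0, and let T₁⁺ = inf{n > 0 : S_n > 0}, T₁⁻ = inf{n>0 : S_n ≤ 0}, M = sup_{n≥0} S_n. Then P(T₁⁺ = ∞) = P(M = 0) = 1/E[T₁⁻], where E[T₁⁻] < ∞. -/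
/-!
Let `k` be the first time at which the walk attains its maximum; it exists almost surely because
`S_n → -∞` by the strong law of large numbers. The event that this happens at `k` is the
intersection of `{S_j < S_k for j < k}` and `{S_{k+j} ≤ S_k for j ≥ 1}`, which depend on disjoint
blocks of increments. Reversing the first `k` increments turns the first event into `{T₁⁻ > k}`,
and shifting by `k` turns the second into `{T₁⁺ = ∞}`. Summing over `k` gives
`1 = Σ_k P(T₁⁻ > k) · P(T₁⁺ = ∞) = E[T₁⁻] · P(T₁⁺ = ∞)`. Finally `M = 0` is the event `T₁⁺ = ∞`.
-/

open MeasureTheory ProbabilityTheory Filter Set Function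

namespace ProbabilityTheory

variable {Ω ι β : Type*} [MeasurableSpace Ω] [mβ : MeasurableSpace β] {P : Measure Ω}
  {X : ι → Ω → β}

theorem iIndepFun.map_comp_injective (hmeas : ∀ i, Measurable (X i)) (hindep : iIndepFun X P)
    {μ : Measure β} (hident : ∀ i, P.map (X i) = μ) {g : ι → ι} (hg : Injective g) :
    P.map (fun ω i ↦ X (g i) ω) = P.map (fun ω i ↦ X i ω) := by
  rw [(hindep.precomp hg).map_fun_eq_infinitePi_map (fun i ↦ hmeas _),
    hindep.map_fun_eq_infinitePi_map hmeas]
  simp only [hident]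

theorem iIndepFun.measure_preimage_comp_injective (hmeas : ∀ i, Measurable (X i))
    (hindep : iIndepFun X P) {μ : Measure β} (hident : ∀ i, P.map (X i) = μ) {g : ι → ι}
    (hg : Injective g) {s : Set (ι → β)} (hs : MeasurableSet s) :
    P ((fun ω i ↦ X (g i) ω) ⁻¹' s) = P ((fun ω i ↦ X i ω) ⁻¹' s) := by
  rw [← Measure.map_apply (by fun_prop) hs, ← Measure.map_apply (by fun_prop) hs,
    hindep.map_comp_injective hmeas hident hg]

theorem iIndepFun.measure_inter_eq_mul_of_disjoint (hmeas : ∀ i, Measurable (X i))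
    (hindep : iIndepFun X P) {I J : Set ι} (hIJ : Disjoint I J) {A B : Set Ω}
    (hA : MeasurableSet[⨆ i ∈ I, mβ.comap (X i)] A)
    (hB : MeasurableSet[⨆ j ∈ J, mβ.comap (X j)] B) :
    P (A ∩ B) = P A * P B :=
  (Indep_iff _ _ _).1 (indep_iSup_of_disjoint (fun i ↦ (hmeas i).comap_le) hindep hIJ) A B hA hB

end ProbabilityTheory

theorem Filter.Tendsto.exists_first_forall_ge {α : Type*} [LinearOrder α] {s : ℕ → α}
    (hs : Tendsto s atTop atBot) : ∃ k, (∀ j < k, s j < s k) ∧ ∀ j, s j ≤ s k := by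
  classical
  have hmax : ∃ k, ∀ j, s j ≤ s k := (Nat.cofinite_eq_atTop ▸ hs).exists_forall_ge
  refine ⟨Nat.find hmax, fun j hj ↦ (Nat.find_spec hmax j).lt_of_ne fun heq ↦ ?_,
    Nat.find_spec hmax⟩
  exact Nat.find_min hmax hj (heq ▸ Nat.find_spec hmax)

namespace RandomWalk

def partialSum (x : ℕ → ℝ) (n : ℕ) : ℝ := ∑ i ∈ Finset.range n, x i

/-- In terms of the ladder epochs, `staysPosUpTo n` is the event `T₁⁻ > n` and `staysNonpos` the
event `T₁⁺ = ∞`. -/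
def staysPosUpTo (n : ℕ) : Set (ℕ → ℝ) := {x | ∀ j, 1 ≤ j → j ≤ n → 0 < partialSum x j}

def staysNonpos : Set (ℕ → ℝ) := {x | ∀ j, 1 ≤ j → partialSum x j ≤ 0}

def strictRecordAt (k : ℕ) : Set (ℕ → ℝ) := {x | ∀ j < k, partialSum x j < partialSum x k}

def noRecordAfter (k : ℕ) : Set (ℕ → ℝ) :=
  {x | ∀ j, 1 ≤ j → partialSum x (k + j) ≤ partialSum x k}

@[fun_prop]
theorem measurable_partialSum (n : ℕ) : Measurable fun x : ℕ → ℝ ↦ partialSum x n := by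
  unfold partialSum; fun_prop

theorem measurableSet_staysPosUpTo (n : ℕ) : MeasurableSet (staysPosUpTo n) :=
  measurableSet_setOfPred.2 (by fun_prop)

theorem measurableSet_staysNonpos : MeasurableSet staysNonpos :=
  measurableSet_setOfPred.2 (by fun_prop)

theorem measurableSet_strictRecordAt (k : ℕ) : MeasurableSet (strictRecordAt k) :=
  measurableSet_setOfPred.2 (by fun_prop)

theorem measurableSet_noRecordAfter (k : ℕ) : MeasurableSet (noRecordAfter k) :=
  measurableSet_setOfPred.2 (by fun_prop)

theorem partialSum_shift (x : ℕ → ℝ) (k j : ℕ) :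
    partialSum (fun i ↦ x (k + i)) j = partialSum x (k + j) - partialSum x k := by
  simp only [partialSum, Finset.sum_range_add, add_sub_cancel_left]

def prefixReflect (k i : ℕ) : ℕ := if i < k then k - 1 - i else i

theorem prefixReflect_involutive (k : ℕ) : Involutive (prefixReflect k) := by
  intro i
  unfold prefixReflect
  split_ifs <;> omega

theorem partialSum_prefixReflect (x : ℕ → ℝ) {k j : ℕ} (hj : j ≤ k) :
    partialSum (fun i ↦ x (prefixReflect k i)) j = partialSum x k - partialSum x (k - j) := by
  obtain ⟨m, rfl⟩ := Nat.exists_eq_add_of_le' hj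
  simp only [partialSum]
  rw [Nat.add_sub_cancel, Finset.sum_range_add, add_sub_cancel_left,
    ← Finset.sum_range_reflect (fun i ↦ x (m + i))]
  refine Finset.sum_congr rfl fun i hi ↦ ?_
  have hij : i < j := Finset.mem_range.1 hi
  simp only [prefixReflect, if_pos (hij.trans_le (Nat.le_add_left j m))]
  congr 1
  omega

theorem strictRecordAt_eq_preimage (k : ℕ) :
    strictRecordAt k = (fun x i ↦ x (prefixReflect k i)) ⁻¹' staysPosUpTo k := by
  ext x
  simp only [strictRecordAt, staysPosUpTo, mem_ofPred_eq, Set.mem_preimage]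
  constructor
  · intro h j hj hjk
    rw [partialSum_prefixReflect x hjk, sub_pos]
    exact h _ (by omega)
  · intro h j hj
    have := h (k - j) (by omega) (Nat.sub_le k j)
    rwa [partialSum_prefixReflect x (Nat.sub_le k j), Nat.sub_sub_self hj.le, sub_pos] at this

theorem noRecordAfter_eq_preimage (k : ℕ) :
    noRecordAfter k = (fun x i ↦ x (k + i)) ⁻¹' staysNonpos := by
  ext x
  simp only [noRecordAfter, staysNonpos, mem_ofPred_eq, Set.mem_preimage, partialSum_shift,
    sub_nonpos]

def lastRecordAt (k : ℕ) : Set (ℕ → ℝ) := strictRecordAt k ∩ noRecordAfter k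

theorem measurableSet_lastRecordAt (k : ℕ) : MeasurableSet (lastRecordAt k) :=
  (measurableSet_strictRecordAt k).inter (measurableSet_noRecordAfter k)

theorem pairwise_disjoint_lastRecordAt : Pairwise (Disjoint on lastRecordAt) := by
  have key : ∀ k l, k < l → Disjoint (lastRecordAt k) (lastRecordAt l) := by
    refine fun k l hkl ↦ Set.disjoint_left.2 fun x ⟨_, hk⟩ ⟨hl, _⟩ ↦ ?_
    have hle := hk (l - k) (by omega)
    rw [Nat.add_sub_cancel' hkl.le] at hle
    exact (hl k hkl).not_ge hle
  intro k l hkl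
  rcases hkl.lt_or_gt with h | h
  · exact key k l h
  · exact (key l k h).symm

theorem exists_lastRecordAt {x : ℕ → ℝ} (hx : Tendsto (partialSum x) atTop atBot) :
    ∃ k, x ∈ lastRecordAt k := by
  obtain ⟨k, hrec, hmax⟩ := hx.exists_first_forall_ge
  exact ⟨k, hrec, fun j _ ↦ hmax (k + j)⟩

theorem iSup_partialSum_eq_zero_iff {x : ℕ → ℝ} (hx : Tendsto (partialSum x) atTop atBot) :
    ⨆ n, partialSum x n = 0 ↔ x ∈ staysNonpos := by
  have hb := bddAbove_range_of_tendsto_atTop_atBot hx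
  have h0 : partialSum x 0 = 0 := Finset.sum_range_zero x
  refine ⟨fun h j _ ↦ h ▸ le_ciSup hb j, fun h ↦ le_antisymm (ciSup_le fun n ↦ ?_) ?_⟩
  · rcases n with _ | n
    · exact h0.le
    · exact h _ (by omega)
  · exact h0 ▸ le_ciSup hb 0

theorem measurableSet_preimage_strictRecordAt {Ω : Type*} {X : ℕ → Ω → ℝ} (k : ℕ) :
    MeasurableSet[⨆ i ∈ Iio k, MeasurableSpace.comap (X i) inferInstance]
      ((fun ω i ↦ X i ω) ⁻¹' strictRecordAt k) := by
  have hsum : ∀ j ≤ k, Measurable[⨆ i ∈ Iio k, MeasurableSpace.comap (X i) inferInstance]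
      fun ω ↦ partialSum (fun i ↦ X i ω) j := fun j hj ↦
    Finset.measurable_sum _ fun i hi ↦ (comap_measurable (X i)).mono
      (le_iSup₂ (f := fun i _ ↦ MeasurableSpace.comap (X i) inferInstance) i
        (mem_Iio.2 ((Finset.mem_range.1 hi).trans_le hj))) le_rfl
  have hset : (fun ω i ↦ X i ω) ⁻¹' strictRecordAt k = ⋂ j, ⋂ (_ : j < k),
      {ω | partialSum (fun i ↦ X i ω) j < partialSum (fun i ↦ X i ω) k} := by
    ext ω; simp [strictRecordAt]
  rw [hset]
  exact MeasurableSet.iInter fun j ↦ MeasurableSet.iInter fun hj ↦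
    measurableSet_lt (hsum j hj.le) (hsum k le_rfl)

theorem measurable_shift {Ω : Type*} {X : ℕ → Ω → ℝ} (k : ℕ) :
    Measurable[⨆ i ∈ Ici k, MeasurableSpace.comap (X i) inferInstance]
      fun ω i ↦ X (k + i) ω := by
  -- `measurable_pi_lambda` reads the σ-algebra on `Ω` from the instance
  let : MeasurableSpace Ω := ⨆ i ∈ Ici k, MeasurableSpace.comap (X i) inferInstance
  refine measurable_pi_lambda _ fun i ↦ (comap_measurable (X (k + i))).mono ?_ le_rfl
  exact le_iSup₂ (f := fun i _ ↦ MeasurableSpace.comap (X i) inferInstance) (k + i)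
    (mem_Ici.2 (Nat.le_add_right k i))

variable {Ω : Type*} [MeasurableSpace Ω] {P : Measure Ω} {X : ℕ → Ω → ℝ}

theorem ae_tendsto_partialSum_atBot (hmeas : ∀ i, Measurable (X i)) (hindep : iIndepFun X P)
    (hident : ∀ i, P.map (X i) = P.map (X 0)) (hint : Integrable (X 0) P)
    (hdrift : ∫ ω, X 0 ω ∂P < 0) :
    ∀ᵐ ω ∂P, Tendsto (partialSum fun i ↦ X i ω) atTop atBot := by
  have hslln := strong_law_ae_real X hint (fun i j hij ↦ hindep.indepFun hij)
    fun i ↦ ⟨(hmeas i).aemeasurable, (hmeas 0).aemeasurable, hident i⟩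
  filter_upwards [hslln] with ω hω
  refine (tendsto_natCast_atTop_atTop.atTop_mul_neg hdrift hω).congr' ?_
  filter_upwards [eventually_ne_atTop 0] with n hn
  exact mul_div_cancel₀ _ (Nat.cast_ne_zero.2 hn)

theorem measure_preimage_lastRecordAt (hmeas : ∀ i, Measurable (X i)) (hindep : iIndepFun X P)
    {μ : Measure ℝ} (hident : ∀ i, P.map (X i) = μ) (k : ℕ) :
    P ((fun ω i ↦ X i ω) ⁻¹' lastRecordAt k)
      = P ((fun ω i ↦ X i ω) ⁻¹' staysPosUpTo k) * P ((fun ω i ↦ X i ω) ⁻¹' staysNonpos) := by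
  have hrecord : (fun ω i ↦ X i ω) ⁻¹' strictRecordAt k
      = (fun ω i ↦ X (prefixReflect k i) ω) ⁻¹' staysPosUpTo k := by
    rw [strictRecordAt_eq_preimage]; rfl
  have hafter : (fun ω i ↦ X i ω) ⁻¹' noRecordAfter k
      = (fun ω i ↦ X (k + i) ω) ⁻¹' staysNonpos := by
    rw [noRecordAfter_eq_preimage]; rfl
  rw [lastRecordAt, preimage_inter, hafter,
    hindep.measure_inter_eq_mul_of_disjoint hmeas (Iio_disjoint_Ici le_rfl)
      (measurableSet_preimage_strictRecordAt k) (measurable_shift k measurableSet_staysNonpos),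
    hrecord,
    hindep.measure_preimage_comp_injective hmeas hident (prefixReflect_involutive k).injective
      (measurableSet_staysPosUpTo k),
    hindep.measure_preimage_comp_injective hmeas hident (add_right_injective k)
      measurableSet_staysNonpos]

theorem tsum_measure_staysPosUpTo_mul_staysNonpos (hmeas : ∀ i, Measurable (X i))
    (hindep : iIndepFun X P) (hident : ∀ i, P.map (X i) = P.map (X 0))
    (hint : Integrable (X 0) P) (hdrift : ∫ ω, X 0 ω ∂P < 0) :
    ∑' k, P ((fun ω i ↦ X i ω) ⁻¹' staysPosUpTo k) * P ((fun ω i ↦ X i ω) ⁻¹' staysNonpos)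
      = 1 := by
  have := hindep.isProbabilityMeasure
  have hcover : ∀ᵐ ω ∂P, ω ∈ ⋃ k, (fun ω i ↦ X i ω) ⁻¹' lastRecordAt k := by
    filter_upwards [ae_tendsto_partialSum_atBot hmeas hindep hident hint hdrift] with ω hω
    exact mem_iUnion.2 (exists_lastRecordAt hω)
  simp_rw [← measure_preimage_lastRecordAt hmeas hindep hident]
  rw [← measure_iUnion (fun k l hkl ↦ (pairwise_disjoint_lastRecordAt hkl).preimage _)
      fun k ↦ measurable_pi_lambda _ hmeas (measurableSet_lastRecordAt k)]
  exact (measure_congr (eventuallyEq_univ.2 hcover)).trans measure_univ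

end RandomWalk

open RandomWalk in
theorem stmt_19_general {Ω : Type*} [MeasurableSpace Ω] (P : Measure Ω) [IsProbabilityMeasure P]
    (X : ℕ → Ω → ℝ) (hmeas : ∀ i, Measurable (X i))
    (hindep : iIndepFun X P)
    (hident : ∀ i, Measure.map (X i) P = Measure.map (X 0) P)
    (hint : Integrable (X 0) P) (hdrift : ∫ ω, X 0 ω ∂P < 0)
    (S : ℕ → Ω → ℝ) (hS : ∀ n ω, S n ω = ∑ i ∈ Finset.range n, X i ω)
    (M : Ω → ℝ) (hM : ∀ ω, M ω = ⨆ n : ℕ, S n ω)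
    (q : ℕ → ℝ) (hq : ∀ n, q n = (P {ω | ∀ j, 1 ≤ j → j ≤ n → 0 < S j ω}).toReal) :
    Summable q ∧
    (P {ω | ∀ j, 1 ≤ j → S j ω ≤ 0}).toReal = (P {ω | M ω = 0}).toReal ∧
    (P {ω | ∀ j, 1 ≤ j → S j ω ≤ 0}).toReal = 1 / ∑' n : ℕ, q n := by
  obtain rfl : S = fun n ω ↦ partialSum (fun i ↦ X i ω) n := funext₂ hS
  obtain rfl : M = fun ω ↦ ⨆ n, partialSum (fun i ↦ X i ω) n := funext hM
  obtain rfl : q = fun n ↦ (P ((fun ω i ↦ X i ω) ⁻¹' staysPosUpTo n)).toReal := funext hq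
  change _ ∧ (P ((fun ω i ↦ X i ω) ⁻¹' staysNonpos)).toReal = _ ∧
    (P ((fun ω i ↦ X i ω) ⁻¹' staysNonpos)).toReal = _
  have hsum := tsum_measure_staysPosUpTo_mul_staysNonpos hmeas hindep hident hint hdrift
  set p := P ((fun ω i ↦ X i ω) ⁻¹' staysNonpos)
  have hp : p ≠ 0 := fun h ↦ by simp [h] at hsum
  have htsum : ∑' k, P ((fun ω i ↦ X i ω) ⁻¹' staysPosUpTo k) = p⁻¹ :=
    ENNReal.eq_inv_of_mul_eq_one_left (ENNReal.tsum_mul_right ▸ hsum)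
  refine ⟨ENNReal.summable_toReal (htsum ▸ ENNReal.inv_ne_top.2 hp), ?_, ?_⟩
  · refine congrArg ENNReal.toReal (measure_congr (eventuallyEq_set.2 ?_))
    filter_upwards [ae_tendsto_partialSum_atBot hmeas hindep hident hint hdrift] with ω hω
    exact (iSup_partialSum_eq_zero_iff hω).symm
  · rw [← ENNReal.tsum_toReal_eq fun _ ↦ measure_ne_top _ _, htsum, ENNReal.toReal_inv,
      one_div, inv_inv]

/-- For a random walk with i.i.d. increments with `E X < 0` and `P(X > 0) > 0`,
with `T₁⁺ = inf{n>0 : S_n > 0}`, `T₁⁻ = inf{n>0 : S_n ≤ 0}`, `M = sup_{n≥0} S_n`: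
`E[T₁⁻] < ∞` (expressed via `E[T₁⁻] = Σ_{n≥0} P(T₁⁻ > n)`) and
`P(T₁⁺ = ∞) = P(M = 0) = 1/E[T₁⁻]`. -/
theorem stmt_19 {Ω : Type*} [MeasurableSpace Ω] (P : Measure Ω) [IsProbabilityMeasure P]
    (X : ℕ → Ω → ℝ) (hmeas : ∀ i, Measurable (X i))
    (hindep : iIndepFun X P)
    (hident : ∀ i, Measure.map (X i) P = Measure.map (X 0) P)
    (hint : Integrable (X 0) P) (hdrift : ∫ ω, X 0 ω ∂P < 0)
    (hpos : 0 < (P {ω | 0 < X 0 ω}).toReal)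
    (S : ℕ → Ω → ℝ) (hS : ∀ n ω, S n ω = ∑ i ∈ Finset.range n, X i ω)
    (M : Ω → ℝ) (hM : ∀ ω, M ω = ⨆ n : ℕ, S n ω)
    (q : ℕ → ℝ) (hq : ∀ n, q n = (P {ω | ∀ j, 1 ≤ j → j ≤ n → 0 < S j ω}).toReal) :
    Summable q ∧
    (P {ω | ∀ j, 1 ≤ j → S j ω ≤ 0}).toReal = (P {ω | M ω = 0}).toReal ∧
    (P {ω | ∀ j, 1 ≤ j → S j ω ≤ 0}).toReal = 1 / ∑' n : ℕ, q n :=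
  stmt_19_general P X hmeas hindep hident hint hdrift S hS M hM q hq
end
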